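/- arXiv:1104.5452 — 6 statements merged into one kernel-verified Lean document; each statement's English description precedes it below -/
import Mathlib

section
/- Let λ ∈ (0,1), t > 0 and p ∈ ℝ, and let m be a (t,p)-conformal Borel probability measure on (0,1]. If λ^t > 1/2, or if λ^t ≤ 1/2 and p > log ψ(t) where ψ(t) = (1−λ)^t/(1−λ^t), then m is dissipative: for m-almost every x ∈ (0,1], F_λ^n(x) → 0 as n → ∞. -/
/-!
Conformality turns the pull-back of mass under `F_λ` into a linear recursion: if `ν_n j` is the
mass of `F_λ^{-n}(W_{J+1}) ∩ W_{j+1}`, then `W_1` receives `d = e^{-p}(1-λ)^t` times the whole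
mass of the previous step and `W_{k+2}` receives `c = d λ^t` times the mass in `(0, λ^k]`.
Weights `φ_j = b α^(j+1)` with `1 + d b α ≤ b` and `1 + c α² ≤ α` make `∑ φ_j ν_n j` a Lyapunov
function dropping by at least `m(F_λ^{-n} W_{J+1})` per step, so these masses are summable and by
Borel–Cantelli almost every orbit eventually leaves each `W_{J+1}`, i.e. tends to `0`.
Such `α` exists if `d < 1 - λ^t` (this is `p > log ψ(t)`), or if `λ^t > 1/2` and `c ≤ 1/4`; the
latter holds for every conformal probability measure, because `a_n = m(0, λ^n]` is a positive
decreasing solution of `a_{n+1} = a_{n+2} + c a_n`.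
-/


open MeasureTheory Set Filter Topology

/-- The Markov partition interval `W n = (lam^n, lam^(n-1)]` for `n ≥ 1`. -/
noncomputable def Wint (lam : ℝ) (n : ℕ) : Set ℝ := Set.Ioc (lam ^ n) (lam ^ (n - 1))

/-- The map `F_lam : (0,1] → (0,1]`, extended by the identity outside `(0,1]`.
On `W n` it is `x ↦ (x - lam^n)/(lam(1-lam))` for `n ≥ 2` and
`x ↦ (x - lam)/(1-lam)` on `W 1`; for `x ∈ (0,1]` the branch index is
the least `n` with `lam^n < x`. -/
noncomputable def Flam (lam : ℝ) (x : ℝ) : ℝ :=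
  if 0 < x ∧ x ≤ 1 then
    if sInf {n : ℕ | lam ^ n < x} = 1 then (x - lam) / (1 - lam)
    else (x - lam ^ sInf {n : ℕ | lam ^ n < x}) / (lam * (1 - lam))
  else x

/-- The slope of `F_lam` on the branch `W n`. -/
noncomputable def slopeW (lam : ℝ) (n : ℕ) : ℝ :=
  if n = 1 then 1 / (1 - lam) else 1 / (lam * (1 - lam))

/-- A Borel measure `m` on `(0,1]` is `(t,p)`-conformal for `F_lam` if for every
branch `W n` and every Borel `A ⊆ W n` one has `m(F_lam(A)) = e^p * s_n^t * m(A)`. -/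
def IsConformal (lam t p : ℝ) (m : Measure ℝ) : Prop :=
  ∀ n : ℕ, 1 ≤ n → ∀ A : Set ℝ, MeasurableSet A → A ⊆ Wint lam n →
    m (Flam lam '' A) = ENNReal.ofReal (Real.exp p * slopeW lam n ^ t) * m A

/-- A set is wandering for `F_lam` if its preimages under all iterates are
pairwise disjoint. -/
def IsWanderingSet (lam : ℝ) (A : Set ℝ) : Prop :=
  Pairwise fun i j : ℕ => Disjoint ((Flam lam)^[i] ⁻¹' A) ((Flam lam)^[j] ⁻¹' A)

open scoped ENNReal

theorem tsum_tsum_le_of_drift {ι : Type*} {ν : ℕ → ι → ℝ≥0∞} {K : ι → ι → ℝ≥0∞}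
    {φ : ι → ℝ≥0∞} (hν : ∀ n i, ν (n + 1) i ≤ ∑' j, K i j * ν n j)
    (hφ : ∀ j, ∑' i, φ i * K i j + 1 ≤ φ j) :
    ∑' n, ∑' j, ν n j ≤ ∑' j, φ j * ν 0 j := by
  set Φ : ℕ → ℝ≥0∞ := fun n => ∑' j, φ j * ν n j
  have hstep (n : ℕ) : Φ (n + 1) + ∑' j, ν n j ≤ Φ n := calc
    Φ (n + 1) + ∑' j, ν n j ≤ ∑' i, φ i * ∑' j, K i j * ν n j + ∑' j, ν n j :=
      add_le_add (ENNReal.tsum_le_tsum fun i => mul_le_mul_right (hν n i) _) le_rfl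
    _ = ∑' j, (∑' i, φ i * K i j + 1) * ν n j := by
      simp_rw [← ENNReal.tsum_mul_left, ← mul_assoc]
      rw [ENNReal.tsum_comm, ← ENNReal.tsum_add]
      simp_rw [ENNReal.tsum_mul_right, add_mul, one_mul]
    _ ≤ Φ n := ENNReal.tsum_le_tsum fun j => mul_le_mul_left (hφ j) _
  have htelescope (N : ℕ) : ∑ n ∈ Finset.range N, ∑' j, ν n j + Φ N ≤ Φ 0 := by
    induction N with
    | zero => simp
    | succ N ih => calc
        _ = ∑ n ∈ Finset.range N, ∑' j, ν n j + (Φ (N + 1) + ∑' j, ν N j) := by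
          rw [Finset.sum_range_succ]; ring
        _ ≤ Φ 0 := (add_le_add_right (hstep N) _).trans ih
  exact ENNReal.tsum_le_of_sum_range_le fun N => le_self_add.trans (htelescope N)

-- Pull-back of mass under `F_λ`: `W_1` gets `d` times all of it, `W_{i+2}` gets `c` times
-- the mass of `⋃_{j ≥ i} W_{j+1} = (0, λ^i]`.
def stepKernel (d c : ℝ≥0∞) : ℕ → ℕ → ℝ≥0∞
  | 0, _ => d
  | i + 1, j => if i ≤ j then c else 0

theorem tsum_mul_stepKernel_add_one_le {d c b α : ℝ≥0∞} (hb : 1 + d * b * α ≤ b)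
    (hα : 1 + c * α ^ 2 ≤ α) (j : ℕ) :
    ∑' i, b * α ^ (i + 1) * stepKernel d c i j + 1 ≤ b * α ^ (j + 1) := by
  have hpartial (n : ℕ) :
      1 + d * b * α + ∑ k ∈ Finset.range n, b * α ^ (k + 2) * c ≤ b * α ^ n := by
    induction n with
    | zero => simpa using hb
    | succ n ih => calc
        _ = 1 + d * b * α + ∑ k ∈ Finset.range n, b * α ^ (k + 2) * c
              + b * α ^ n * (c * α ^ 2) := by
          rw [Finset.sum_range_succ]; ring
        _ ≤ b * α ^ n * (1 + c * α ^ 2) := by rw [mul_add, mul_one]; gcongr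
        _ ≤ b * α ^ n * α := by gcongr
        _ = b * α ^ (n + 1) := by ring
  calc ∑' i, b * α ^ (i + 1) * stepKernel d c i j + 1
      = 1 + d * b * α + ∑ k ∈ Finset.range (j + 1), b * α ^ (k + 2) * c := by
        rw [tsum_eq_zero_add' ENNReal.summable, tsum_eq_sum (s := Finset.range (j + 1))
          fun k hk => by simp [stepKernel, show ¬k ≤ j by simpa [Nat.lt_succ_iff] using hk],
          Finset.sum_congr rfl fun k hk => by
            rw [stepKernel, if_pos (Nat.lt_succ_iff.1 (Finset.mem_range.1 hk))]]
        simp only [stepKernel]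
        ring
    _ ≤ b * α ^ (j + 1) := hpartial (j + 1)

theorem exists_drift_rate {d q : ℝ} (hd : 0 < d) (hq : 0 ≤ q)
    (hcase : 1 / 2 < q ∧ d * q ≤ 1 / 4 ∨ q ≤ 1 / 2 ∧ d < 1 - q) :
    ∃ α : ℝ, 0 ≤ α ∧ d * α < 1 ∧ 1 + d * q * α ^ 2 ≤ α := by
  rcases hcase with ⟨hq_gt, hdq⟩ | ⟨hq_le, hdq⟩
  · exact ⟨2, by norm_num, by nlinarith, by nlinarith⟩
  · have hq1 : 0 < 1 - q := by linarith
    refine ⟨(1 - q)⁻¹, by positivity, ?_, ?_⟩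
    · rw [← div_eq_mul_inv, div_lt_one hq1]; exact hdq
    · rw [← sub_nonneg]
      have : (1 - q)⁻¹ - (1 + d * q * (1 - q)⁻¹ ^ 2) = q * (1 - q - d) * (1 - q)⁻¹ ^ 2 := by
        field_simp; ring
      rw [this]
      exact mul_nonneg (mul_nonneg hq (by linarith)) (sq_nonneg _)

theorem exists_stepKernel_drift_weights {d c α : ℝ} (hd : 0 ≤ d) (hc : 0 ≤ c) (hα : 0 ≤ α)
    (hdα : d * α < 1) (hcα : 1 + c * α ^ 2 ≤ α) :
    ∃ φ : ℕ → ℝ≥0∞, (∀ j, φ j ≠ ∞) ∧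
      ∀ j, ∑' i, φ i * stepKernel (ENNReal.ofReal d) (ENNReal.ofReal c) i j + 1 ≤ φ j := by
  set b := (1 - d * α)⁻¹
  have hb : 0 ≤ b := inv_nonneg.2 (by linarith)
  have hdb : 1 + d * b * α = b := by
    have : 1 - d * α ≠ 0 := by linarith
    simp only [b]; field_simp; ring
  refine ⟨fun j => ENNReal.ofReal b * ENNReal.ofReal α ^ (j + 1), fun j => by finiteness,
    tsum_mul_stepKernel_add_one_le ?_ ?_⟩
  · rw [← ENNReal.ofReal_mul hd, ← ENNReal.ofReal_mul (by positivity), ← ENNReal.ofReal_one,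
      ← ENNReal.ofReal_add zero_le_one (by positivity), hdb]
  · rw [← ENNReal.ofReal_pow hα, ← ENNReal.ofReal_mul hc, ← ENNReal.ofReal_one,
      ← ENNReal.ofReal_add zero_le_one (by positivity)]
    exact ENNReal.ofReal_le_ofReal hcα

theorem le_quarter_of_recurrence {a : ℕ → ℝ} {c : ℝ} (h0 : 0 < a 0) (hnonneg : ∀ n, 0 ≤ a n)
    (hanti : Antitone a) (hrec : ∀ n, a (n + 1) = a (n + 2) + c * a n) : c ≤ 1 / 4 := by
  by_contra! hc
  have hpos (n : ℕ) : 0 < a n := by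
    induction n with
    | zero => exact h0
    | succ n ih =>
      refine (hnonneg _).lt_of_ne fun h => ?_
      nlinarith [hrec n, hnonneg (n + 2)]
  -- The ratios `a (n + 1) / a n` would decrease by at least `c - 1/4` at every step.
  set r : ℕ → ℝ := fun n => a (n + 1) / a n
  have hr_pos (n : ℕ) : 0 < r n := div_pos (hpos _) (hpos _)
  have hr_le (n : ℕ) : r n ≤ 1 := (div_le_one (hpos n)).2 (hanti n.le_succ)
  have hr_rec (n : ℕ) : r n = r (n + 1) * r n + c := by
    have := hpos n; have := hpos (n + 1)
    simp only [r]
    field_simp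
    linarith [hrec n]
  have hr_step (n : ℕ) : r (n + 1) ≤ r n - (c - 1 / 4) := by
    nlinarith [hr_rec n, hr_pos n, sq_nonneg (r n - 1 / 2),
      mul_nonneg (sub_nonneg.2 hc.le) (sub_nonneg.2 (hr_le n))]
  have hr_bound (n : ℕ) : r n ≤ 1 - n * (c - 1 / 4) := by
    induction n with
    | zero => simpa using hr_le 0
    | succ n ih => push_cast; linarith [hr_step n]
  obtain ⟨n, hn⟩ := exists_nat_gt (1 / (c - 1 / 4))
  rw [div_lt_iff₀ (by linarith)] at hn
  linarith [hr_bound n, hr_pos n]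

theorem Wint_succ (lam : ℝ) (k : ℕ) : Wint lam (k + 1) = Ioc (lam ^ (k + 1)) (lam ^ k) := rfl

theorem measurableSet_Wint (lam : ℝ) (n : ℕ) : MeasurableSet (Wint lam n) := measurableSet_Ioc

section Branches

variable {lam : ℝ}

theorem Flam_of_notMem {x : ℝ} (hx : x ∉ Ioc 0 1) : Flam lam x = x :=
  if_neg hx

variable (h1 : 0 < lam) (h2 : lam < 1)
include h1 h2

theorem mem_Wint_succ_iff_sInf {x : ℝ} {k : ℕ} :
    x ∈ Wint lam (k + 1) ↔ sInf {n : ℕ | lam ^ n < x} = k + 1 := by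
  rw [Nat.sInf_upward_closed_eq_succ_iff (s := {n : ℕ | lam ^ n < x}) fun i j hij hi =>
    (pow_le_pow_of_le_one h1.le h2.le hij).trans_lt hi]
  simp [Wint_succ]

theorem Wint_subset_Ioc (k : ℕ) : Wint lam (k + 1) ⊆ Ioc 0 1 := fun _ hx =>
  ⟨(pow_pos h1 _).trans hx.1, hx.2.trans (pow_le_one₀ h1.le h2.le)⟩

theorem exists_mem_Wint {x : ℝ} (hx : x ∈ Ioc 0 1) : ∃ k, x ∈ Wint lam (k + 1) := by
  have hne : sInf {n : ℕ | lam ^ n < x} ≠ 0 := by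
    rw [Ne, Nat.sInf_eq_zero, not_or]
    refine ⟨by simpa using hx.2, ?_⟩
    obtain ⟨n, hn⟩ := exists_pow_lt_of_lt_one hx.1 h2
    exact Set.nonempty_iff_ne_empty.mp ⟨n, hn⟩
  obtain ⟨k, hk⟩ := Nat.exists_eq_succ_of_ne_zero hne
  exact ⟨k, (mem_Wint_succ_iff_sInf h1 h2).2 hk⟩

theorem iUnion_Wint : ⋃ k, Wint lam (k + 1) = Ioc 0 1 :=
  (iUnion_subset (Wint_subset_Ioc h1 h2)).antisymm fun _ hx =>
    mem_iUnion.2 (exists_mem_Wint h1 h2 hx)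

theorem pairwise_disjoint_Wint :
    Pairwise fun i j => Disjoint (Wint lam (i + 1)) (Wint lam (j + 1)) :=
  fun i j hij => Set.disjoint_left.2 fun x hi hj => hij <| by
    simpa using ((mem_Wint_succ_iff_sInf h1 h2).1 hi).symm.trans
      ((mem_Wint_succ_iff_sInf h1 h2).1 hj)

theorem Wint_inter_Ioc_pow (j k : ℕ) :
    Wint lam (j + 1) ∩ Ioc 0 (lam ^ k) = if k ≤ j then Wint lam (j + 1) else ∅ := by
  split_ifs with hkj
  · exact inter_eq_left.2 fun x hx => ⟨(Wint_subset_Ioc h1 h2 j hx).1,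
      hx.2.trans (pow_le_pow_of_le_one h1.le h2.le hkj)⟩
  · refine Set.disjoint_iff_inter_eq_empty.1 (Set.disjoint_left.2 fun x hx hxk => ?_)
    exact (hx.1.trans_le hxk.2).not_ge (pow_le_pow_of_le_one h1.le h2.le (by omega))

theorem slopeW_pos (k : ℕ) : 0 < slopeW lam (k + 1) := by
  have : 0 < 1 - lam := sub_pos.2 h2
  unfold slopeW; split_ifs <;> positivity

theorem Flam_of_mem_Wint {x : ℝ} {k : ℕ} (hx : x ∈ Wint lam (k + 1)) :
    Flam lam x = slopeW lam (k + 1) * (x - lam ^ (k + 1)) := by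
  have : 1 - lam ≠ 0 := (sub_pos.2 h2).ne'
  rw [Flam, if_pos (show 0 < x ∧ x ≤ 1 from Wint_subset_Ioc h1 h2 k hx),
    (mem_Wint_succ_iff_sInf h1 h2).1 hx, slopeW]
  split_ifs with hk
  · rw [hk]; field_simp
  · field_simp

theorem image_Flam_Wint (k : ℕ) :
    Flam lam '' Wint lam (k + 1) = Ioc 0 (slopeW lam (k + 1) * (lam ^ k - lam ^ (k + 1))) := by
  rw [Set.EqOn.image_eq fun x hx => Flam_of_mem_Wint h1 h2 hx,
    show (fun x => slopeW lam (k + 1) * (x - lam ^ (k + 1))) =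
      (slopeW lam (k + 1) * ·) ∘ (· - lam ^ (k + 1)) from rfl, image_comp, Wint_succ,
    image_sub_const_Ioc, image_mul_left_Ioc (slopeW_pos h1 h2 k), sub_self, mul_zero]

theorem image_Flam_Wint_one : Flam lam '' Wint lam 1 = Ioc 0 1 := by
  have : 1 - lam ≠ 0 := (sub_pos.2 h2).ne'
  rw [image_Flam_Wint h1 h2 0, slopeW, if_pos rfl, zero_add, pow_zero, pow_one, one_div,
    inv_mul_cancel₀ this]

theorem image_Flam_Wint_add_two (k : ℕ) : Flam lam '' Wint lam (k + 2) = Ioc 0 (lam ^ k) := by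
  have : lam * (1 - lam) ≠ 0 := mul_ne_zero h1.ne' (sub_pos.2 h2).ne'
  rw [image_Flam_Wint h1 h2 (k + 1), slopeW, if_neg (by omega),
    show lam ^ (k + 1) - lam ^ (k + 1 + 1) = lam * (1 - lam) * lam ^ k by ring, one_div,
    inv_mul_cancel_left₀ this]

theorem mapsTo_Flam : MapsTo (Flam lam) (Ioc 0 1) (Ioc 0 1) := fun x hx => by
  obtain ⟨k, hk⟩ := exists_mem_Wint h1 h2 hx
  cases k with
  | zero => exact image_Flam_Wint_one h1 h2 ▸ mem_image_of_mem (Flam lam) hk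
  | succ k =>
    have := image_Flam_Wint_add_two h1 h2 k ▸ mem_image_of_mem (Flam lam) hk
    exact ⟨this.1, this.2.trans (pow_le_one₀ h1.le h2.le)⟩

theorem measurable_Flam : Measurable (Flam lam) := by
  set N : ℝ → ℕ := fun x => sInf {n : ℕ | lam ^ n < x}
  have hsucc (k : ℕ) : MeasurableSet (N ⁻¹' {k + 1}) := by
    convert measurableSet_Ioc (a := lam ^ (k + 1)) (b := lam ^ k) using 1
    ext x
    exact (mem_Wint_succ_iff_sInf h1 h2).symm
  have hN : Measurable N := by
    refine measurable_to_countable' fun k => ?_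
    cases k with
    | zero =>
      convert (MeasurableSet.iUnion hsucc).compl using 1
      ext x
      simp only [mem_preimage, mem_singleton_iff, mem_compl_iff, mem_iUnion, not_exists]
      cases N x <;> simp
    | succ k => exact hsucc k
  have hpow : Measurable fun x => lam ^ N x := measurable_from_top.comp hN
  unfold Flam
  exact Measurable.ite measurableSet_Ioc (Measurable.ite (hN (measurableSet_singleton 1))
    (by fun_prop) (by fun_prop)) measurable_id

end Branches

noncomputable def branchWeight (lam t p : ℝ) (k : ℕ) : ℝ :=
  (Real.exp p * slopeW lam (k + 1) ^ t)⁻¹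

noncomputable abbrev pullbackKernel (lam t p : ℝ) : ℕ → ℕ → ℝ≥0∞ :=
  stepKernel (ENNReal.ofReal (branchWeight lam t p 0)) (ENNReal.ofReal (branchWeight lam t p 1))

section Conformal

variable {lam t p : ℝ} {m : Measure ℝ}

theorem branchWeight_zero (h2 : lam < 1) :
    branchWeight lam t p 0 = Real.exp (-p) * (1 - lam) ^ t := by
  rw [branchWeight, slopeW, if_pos rfl, one_div, Real.inv_rpow (sub_pos.2 h2).le, mul_inv,
    inv_inv, Real.exp_neg]

theorem branchWeight_zero_lt (h2 : lam < 1) (hq : lam ^ t < 1)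
    (hlog : Real.log ((1 - lam) ^ t / (1 - lam ^ t)) < p) :
    branchWeight lam t p 0 < 1 - lam ^ t := by
  have hψ : 0 < (1 - lam) ^ t / (1 - lam ^ t) :=
    div_pos (Real.rpow_pos_of_pos (sub_pos.2 h2) t) (sub_pos.2 hq)
  rw [Real.log_lt_iff_lt_exp hψ, div_lt_iff₀ (sub_pos.2 hq)] at hlog
  rw [branchWeight_zero h2, Real.exp_neg, inv_mul_lt_iff₀ (Real.exp_pos p)]
  linarith

variable (h1 : 0 < lam) (h2 : lam < 1)
include h1 h2

theorem branchWeight_succ (k : ℕ) :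
    branchWeight lam t p (k + 1) = branchWeight lam t p 0 * lam ^ t := by
  rw [branchWeight_zero h2, branchWeight, slopeW, if_neg (by omega), one_div,
    Real.inv_rpow (mul_pos h1 (sub_pos.2 h2)).le, mul_inv, inv_inv, Real.exp_neg,
    Real.mul_rpow h1.le (sub_pos.2 h2).le]
  ring

theorem branchWeight_pos (k : ℕ) : 0 < branchWeight lam t p k := by
  have := slopeW_pos h1 h2 k
  unfold branchWeight; positivity

theorem measure_inter_Ioc_pow_eq_tsum {B : Set ℝ} (hB : MeasurableSet B) (k : ℕ) :
    m (B ∩ Ioc 0 (lam ^ k)) = ∑' j, if k ≤ j then m (B ∩ Wint lam (j + 1)) else 0 := by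
  have hsub : B ∩ Ioc 0 (lam ^ k) ⊆ ⋃ j, Wint lam (j + 1) := iUnion_Wint h1 h2 ▸
    inter_subset_right.trans (Ioc_subset_Ioc_right (pow_le_one₀ h1.le h2.le))
  rw [← inter_eq_left.2 hsub, inter_iUnion, measure_iUnion
    (fun i j hij => ((pairwise_disjoint_Wint h1 h2 hij).mono inter_subset_right
      inter_subset_right))
    fun j => (hB.inter measurableSet_Ioc).inter (measurableSet_Wint lam _)]
  refine tsum_congr fun j => ?_
  rw [inter_assoc, inter_comm _ (Wint lam _), Wint_inter_Ioc_pow h1 h2]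
  split_ifs <;> simp

theorem IsConformal.measure_eq_mul_image (hconf : IsConformal lam t p m) {k : ℕ} {A : Set ℝ}
    (hA : MeasurableSet A) (hAW : A ⊆ Wint lam (k + 1)) :
    m A = ENNReal.ofReal (branchWeight lam t p k) * m (Flam lam '' A) := by
  have hpos : 0 < Real.exp p * slopeW lam (k + 1) ^ t := by
    have := slopeW_pos h1 h2 k; positivity
  rw [hconf (k + 1) (by omega) A hA hAW, ← mul_assoc, branchWeight,
    ← ENNReal.ofReal_mul (inv_nonneg.2 hpos.le), inv_mul_cancel₀ hpos.ne', ENNReal.ofReal_one,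
    one_mul]

theorem IsConformal.measure_preimage_inter_Wint (hconf : IsConformal lam t p m) {B : Set ℝ}
    (hB : MeasurableSet B) (i : ℕ) :
    m (Flam lam ⁻¹' B ∩ Wint lam (i + 1)) =
      ∑' j, pullbackKernel lam t p i j * m (B ∩ Wint lam (j + 1)) := by
  rw [hconf.measure_eq_mul_image h1 h2
    ((measurable_Flam h1 h2 hB).inter (measurableSet_Wint lam _)) inter_subset_right, inter_comm,
    image_inter_preimage, inter_comm]
  cases i with
  | zero =>
    rw [image_Flam_Wint_one h1 h2, ← pow_zero lam, measure_inter_Ioc_pow_eq_tsum h1 h2 hB,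
      ← ENNReal.tsum_mul_left]
    simp [stepKernel]
  | succ i =>
    rw [image_Flam_Wint_add_two h1 h2, measure_inter_Ioc_pow_eq_tsum h1 h2 hB,
      ← ENNReal.tsum_mul_left, branchWeight_succ h1 h2, ← branchWeight_succ h1 h2 0]
    refine tsum_congr fun j => ?_
    simp only [stepKernel]
    split_ifs <;> simp

end Conformal

section Dissipation

variable {lam t p : ℝ} {m : Measure ℝ} (h1 : 0 < lam) (h2 : lam < 1)
include h1 h2

theorem IsConformal.branchWeight_one_le_quarter (hm1 : m (Ioc 0 1) = 1)
    (hconf : IsConformal lam t p m) : branchWeight lam t p 1 ≤ 1 / 4 := by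
  have hfin (n : ℕ) : m (Ioc 0 (lam ^ n)) ≠ ∞ :=
    ne_top_of_le_ne_top (hm1 ▸ ENNReal.one_ne_top)
      (measure_mono (Ioc_subset_Ioc_right (pow_le_one₀ h1.le h2.le)))
  have hanti : Antitone fun n => m (Ioc 0 (lam ^ n)) := fun i j hij =>
    measure_mono (Ioc_subset_Ioc_right (pow_le_pow_of_le_one h1.le h2.le hij))
  refine le_quarter_of_recurrence (a := fun n => (m (Ioc 0 (lam ^ n))).toReal)
    (by simp [hm1]) (fun n => ENNReal.toReal_nonneg)
    (fun i j hij => ENNReal.toReal_mono (hfin i) (hanti hij)) fun n => ?_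
  have hsplit : m (Ioc 0 (lam ^ (n + 1))) = m (Ioc 0 (lam ^ (n + 2))) + m (Wint lam (n + 2)) := by
    rw [show Wint lam (n + 2) = Ioc (lam ^ (n + 2)) (lam ^ (n + 1)) from rfl,
      ← measure_union (Ioc_disjoint_Ioc_of_le le_rfl) measurableSet_Ioc,
      Ioc_union_Ioc_eq_Ioc (by positivity) (pow_le_pow_of_le_one h1.le h2.le (by omega))]
  have hW : m (Wint lam (n + 2)) =
      ENNReal.ofReal (branchWeight lam t p 1) * m (Ioc 0 (lam ^ n)) := by
    rw [hconf.measure_eq_mul_image h1 h2 (measurableSet_Wint lam _) subset_rfl,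
      image_Flam_Wint_add_two h1 h2, branchWeight_succ h1 h2, branchWeight_succ h1 h2 0]
  rw [hsplit, hW, ENNReal.toReal_add (hfin _) (ENNReal.mul_ne_top ENNReal.ofReal_ne_top (hfin _)),
    ENNReal.toReal_mul, ENNReal.toReal_ofReal (branchWeight_pos h1 h2 1).le]

theorem IsConformal.exists_drift_weights (hm1 : m (Ioc 0 1) = 1)
    (hconf : IsConformal lam t p m)
    (hcase : 1 / 2 < lam ^ t ∨ (lam ^ t ≤ 1 / 2 ∧ Real.log ((1 - lam) ^ t / (1 - lam ^ t)) < p)) :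
    ∃ φ : ℕ → ℝ≥0∞, (∀ j, φ j ≠ ∞) ∧ ∀ j, ∑' i, φ i * pullbackKernel lam t p i j + 1 ≤ φ j := by
  have hd := branchWeight_pos h1 h2 (t := t) (p := p) 0
  have hq := Real.rpow_nonneg h1.le t
  have hc : branchWeight lam t p 1 = branchWeight lam t p 0 * lam ^ t := branchWeight_succ h1 h2 0
  obtain ⟨α, hα, hdα, hcα⟩ := exists_drift_rate hd hq <| hcase.imp
    (fun hq_gt => ⟨hq_gt, hc ▸ hconf.branchWeight_one_le_quarter h1 h2 hm1⟩)
    fun ⟨hq_le, hlog⟩ => ⟨hq_le, branchWeight_zero_lt h2 (by linarith) hlog⟩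
  exact exists_stepKernel_drift_weights hd.le (branchWeight_pos h1 h2 1).le hα hdα (hc ▸ hcα)

theorem IsConformal.tsum_measure_preimage_iterate_Wint_ne_top (hm1 : m (Ioc 0 1) = 1)
    (hconf : IsConformal lam t p m) {φ : ℕ → ℝ≥0∞} (hφ_ne_top : ∀ j, φ j ≠ ∞)
    (hφ : ∀ j, ∑' i, φ i * pullbackKernel lam t p i j + 1 ≤ φ j) (J : ℕ) :
    ∑' n, m ((Flam lam)^[n] ⁻¹' Wint lam (J + 1)) ≠ ∞ := by
  set D : ℕ → Set ℝ := fun n => (Flam lam)^[n] ⁻¹' Wint lam (J + 1)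
  have hD_meas (n : ℕ) : MeasurableSet (D n) :=
    (measurable_Flam h1 h2).iterate n (measurableSet_Wint lam _)
  have hD_sub (n : ℕ) : D n ⊆ Ioc 0 1 := fun x hx => by
    by_contra hx'
    rw [mem_preimage, Function.iterate_fixed (Flam_of_notMem hx')] at hx
    exact hx' (Wint_subset_Ioc h1 h2 J hx)
  have hD_eq (n : ℕ) : m (D n) = ∑' j, m (D n ∩ Wint lam (j + 1)) := by
    simpa [inter_eq_left.2 (hD_sub n)] using measure_inter_Ioc_pow_eq_tsum h1 h2 (hD_meas n) 0
  have hD_zero : ∑' j, φ j * m (D 0 ∩ Wint lam (j + 1)) = φ J * m (Wint lam (J + 1)) := by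
    refine (tsum_eq_single J fun j hj => ?_).trans (by simp [D])
    change φ j * m (Wint lam (J + 1) ∩ Wint lam (j + 1)) = 0
    rw [(pairwise_disjoint_Wint h1 h2 (Ne.symm hj)).inter_eq, measure_empty, mul_zero]
  have hW_ne_top : m (Wint lam (J + 1)) ≠ ∞ :=
    ne_top_of_le_ne_top (hm1 ▸ ENNReal.one_ne_top) (measure_mono (Wint_subset_Ioc h1 h2 J))
  refine ne_top_of_le_ne_top (ENNReal.mul_ne_top (hφ_ne_top J) hW_ne_top) ?_
  calc ∑' n, m (D n) = ∑' n, ∑' j, m (D n ∩ Wint lam (j + 1)) := tsum_congr hD_eq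
    _ ≤ ∑' j, φ j * m (D 0 ∩ Wint lam (j + 1)) := tsum_tsum_le_of_drift
      (fun n i => (hconf.measure_preimage_inter_Wint h1 h2 (hD_meas n) i).le) hφ
    _ = φ J * m (Wint lam (J + 1)) := hD_zero

theorem tendsto_iterate_Flam_zero {x : ℝ} (hx : x ∈ Ioc 0 1)
    (h : ∀ J, ∀ᶠ n in atTop, (Flam lam)^[n] x ∉ Wint lam (J + 1)) :
    Tendsto (fun n => (Flam lam)^[n] x) atTop (𝓝 0) := by
  have hmem (n : ℕ) : (Flam lam)^[n] x ∈ Ioc 0 1 := (mapsTo_Flam h1 h2).iterate n hx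
  refine tendsto_order.2 ⟨fun a ha => Eventually.of_forall fun n => ha.trans (hmem n).1,
    fun ε hε => ?_⟩
  obtain ⟨M, hM⟩ := exists_pow_lt_of_lt_one hε h2
  filter_upwards [(eventually_all_finset (Finset.range M)).2 fun J _ => h J] with n hn
  obtain ⟨k, hk⟩ := exists_mem_Wint h1 h2 (hmem n)
  have hMk : M ≤ k := by
    by_contra! hkM
    exact hn k (Finset.mem_range.2 hkM) hk
  exact hk.2.trans_lt ((pow_le_pow_of_le_one h1.le h2.le hMk).trans_lt hM)

end Dissipation

theorem stmt8_general (lam t p : ℝ) (h1 : 0 < lam) (h2 : lam < 1)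
    (m : Measure ℝ) (hm1 : m (Set.Ioc 0 1) = 1)
    (hconf : IsConformal lam t p m)
    (hcase : 1/2 < lam ^ t ∨
      (lam ^ t ≤ 1/2 ∧ Real.log ((1-lam)^t / (1 - lam^t)) < p)) :
    ∀ᵐ x ∂m, x ∈ Set.Ioc (0:ℝ) 1 →
      Filter.Tendsto (fun n => (Flam lam)^[n] x) Filter.atTop (nhds 0) := by
  obtain ⟨φ, hφ_ne_top, hφ⟩ := hconf.exists_drift_weights h1 h2 hm1 hcase
  have hfinite (J : ℕ) := hconf.tsum_measure_preimage_iterate_Wint_ne_top h1 h2 hm1 hφ_ne_top hφ J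
  filter_upwards [ae_all_iff.2 fun J => ae_eventually_notMem (hfinite J)] with x hx hx01
  exact tendsto_iterate_Flam_zero h1 h2 hx01 hx

/-- A `(t,p)`-conformal probability measure `m` is dissipative
(orbits tend to `0` for `m`-a.e. `x ∈ (0,1]`) whenever `lam^t > 1/2`, or
`lam^t ≤ 1/2` and `p > log ψ(t)`. -/
theorem stmt8 (lam t p : ℝ) (h1 : 0 < lam) (h2 : lam < 1) (ht : 0 < t)
    (m : Measure ℝ) (hm : IsProbabilityMeasure m) (hm1 : m (Set.Ioc 0 1) = 1)
    (hconf : IsConformal lam t p m)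
    (hcase : 1/2 < lam ^ t ∨
      (lam ^ t ≤ 1/2 ∧ Real.log ((1-lam)^t / (1 - lam^t)) < p)) :
    ∀ᵐ x ∂m, x ∈ Set.Ioc (0:ℝ) 1 →
      Filter.Tendsto (fun n => (Flam lam)^[n] x) Filter.atTop (nhds 0) :=
  stmt8_general lam t p h1 h2 m hm1 hconf hcase
end

section
/- Let λ ∈ (0,1) and t > 0 with λ^t < 1/2. Then there exist a (t, log ψ(t))-conformal Borel probability measure m_t on (0,1] with m_t(W_k) = (1−λ^t)·λ^{t(k−1)} for all k ≥ 1, and an F_λ-invariant Borel probability measure μ_t absolutely continuous with respect to m_t, satisfying μ_t(W_j) = ((1−2λ^t)/λ^t)·(λ^t/(1−λ^t))^j for every j ≥ 1. -/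
/-!
Write `β = lam ^ t`. Since `exp (log ψ(t)) * s_k ^ t = 1 / c_k` with `c_1 = 1 - β` and
`c_k = β (1 - β)` for `k ≥ 2`, conformality asks for `m (F_lam A) = m A / c_k` when `A ⊆ W k`.
As `F_lam` maps `W k` affinely onto `(0, lam ^ (k - 2)]`, for the distribution function `G` of `m`
this is the self-similarity `G = β ^ k + c_k * G ∘ F_lam` on `W k`, with `G (lam ^ j) = β ^ j`.
The right-hand side defines a `(1 - β)`-contraction, for the sup metric, of the monotone
continuous functions taking these values, so Banach's fixed point theorem produces `G`, and `m` is
its Stieltjes measure.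

The invariant measure has density `ρ_k = (1 - 2β) / (1 - β) ^ (k + 1)` on `W k` with respect to
`m`. A point of `W k` has exactly one preimage in each `W j` with `j ≤ k + 1`, so invariance
reduces to the telescoping identity `∑_{j ≤ k + 1} c_j ρ_j = ρ_k`; the hypothesis
`lam ^ t < 1 / 2` makes `ρ` positive and `∑ ρ_k m (W k) = 1`.
-/

open MeasureTheory Set Filter Topology

lemma ENNReal.tsum_mul_tsum_ite_le_add_one (a x : ℕ → ENNReal) :
    ∑' n, a n * ∑' k, (if n ≤ k + 1 then x k else 0) =
      ∑' k, (∑ n ∈ Finset.range (k + 2), a n) * x k := by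
  simp_rw [← ENNReal.tsum_mul_left, mul_ite, mul_zero]
  rw [ENNReal.tsum_comm]
  refine tsum_congr fun k => ?_
  rw [tsum_eq_sum (s := Finset.range (k + 2)) fun n hn => if_neg (by simp at hn; omega),
    Finset.sum_mul]
  exact Finset.sum_congr rfl fun n hn => if_pos (by simp at hn; omega)

lemma summable_pow_sub_two {β : ℝ} (hβ0 : 0 ≤ β) (hβ1 : β < 1) : Summable fun n => β ^ (n - 2) :=
  (summable_nat_add_iff 2).1 (by simpa using summable_geometric_of_lt_one hβ0 hβ1)

namespace Flam

open Finset (range)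

variable {lam β x : ℝ} {n : ℕ}

noncomputable def branchIndex (lam x : ℝ) : ℕ := sInf {n : ℕ | lam ^ n < x}

noncomputable def branch (lam : ℝ) (n : ℕ) (x : ℝ) : ℝ := slopeW lam n * (x - lam ^ n)

lemma branchIndex_le_iff (h0 : 0 < lam) (h1 : lam < 1) (hx : 0 < x) :
    branchIndex lam x ≤ n ↔ lam ^ n < x := by
  refine ⟨fun h => ?_, fun h => Nat.sInf_le h⟩
  obtain ⟨k, hk⟩ := exists_pow_lt_of_lt_one hx h1
  exact (pow_le_pow_of_le_one h0.le h1.le h).trans_lt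
    (Nat.sInf_mem (s := {n : ℕ | lam ^ n < x}) ⟨k, hk⟩)

lemma lt_branchIndex_iff (h0 : 0 < lam) (h1 : lam < 1) (hx : 0 < x) :
    n < branchIndex lam x ↔ x ≤ lam ^ n := by
  rw [← not_le, branchIndex_le_iff h0 h1 hx, not_lt]

lemma mem_Ioc_zero_pow_iff (h0 : 0 < lam) (h1 : lam < 1) :
    x ∈ Ioc 0 (lam ^ n) ↔ 0 < x ∧ n < branchIndex lam x :=
  and_congr_right fun hx => (lt_branchIndex_iff h0 h1 hx).symm

lemma mem_Wint_iff (h0 : 0 < lam) (h1 : lam < 1) (hn : 1 ≤ n) :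
    x ∈ Wint lam n ↔ 0 < x ∧ branchIndex lam x = n := by
  obtain ⟨k, rfl⟩ := Nat.exists_eq_add_of_le' hn
  simp only [Wint, Nat.add_sub_cancel, mem_Ioc]
  constructor
  · rintro ⟨hl, hr⟩
    have hx : 0 < x := (pow_pos h0 _).trans hl
    have := (branchIndex_le_iff h0 h1 hx).2 hl
    have := (lt_branchIndex_iff h0 h1 hx).2 hr
    exact ⟨hx, by omega⟩
  · rintro ⟨hx, hk⟩
    exact ⟨(branchIndex_le_iff h0 h1 hx).1 hk.le, (lt_branchIndex_iff h0 h1 hx).1 (by omega)⟩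

lemma measurableSet_Wint (lam : ℝ) (n : ℕ) : MeasurableSet (Wint lam n) := measurableSet_Ioc

lemma Wint_subset_Ioc_zero_pow (h0 : 0 < lam) (h1 : lam < 1) {m : ℕ} (hmn : m < n) :
    Wint lam n ⊆ Ioc 0 (lam ^ m) := fun x hx => by
  obtain ⟨hx0, hxn⟩ := (mem_Wint_iff h0 h1 (by omega)).1 hx
  exact (mem_Ioc_zero_pow_iff h0 h1).2 ⟨hx0, hxn ▸ hmn⟩

lemma Wint_subset_Ioc (h0 : 0 < lam) (h1 : lam < 1) (hn : 1 ≤ n) : Wint lam n ⊆ Ioc 0 1 := by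
  simpa using Wint_subset_Ioc_zero_pow h0 h1 (m := 0) hn

lemma disjoint_Wint_Ioc_zero_pow (h0 : 0 < lam) (h1 : lam < 1) (hn : 1 ≤ n) {m : ℕ}
    (hnm : n ≤ m) : Disjoint (Wint lam n) (Ioc 0 (lam ^ m)) :=
  Set.disjoint_left.2 fun x hx hx' => by
    have := ((mem_Wint_iff h0 h1 hn).1 hx).2
    have := ((mem_Ioc_zero_pow_iff h0 h1).1 hx').2
    omega

lemma pairwise_disjoint_Wint (h0 : 0 < lam) (h1 : lam < 1) :
    Pairwise fun i j => Disjoint (Wint lam (i + 1)) (Wint lam (j + 1)) := fun i j hij =>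
  Set.disjoint_left.2 fun x hi hj => hij <| by
    have := ((mem_Wint_iff h0 h1 (by omega)).1 hi).2
    have := ((mem_Wint_iff h0 h1 (by omega)).1 hj).2
    omega

lemma iUnion_Wint (h0 : 0 < lam) (h1 : lam < 1) : ⋃ k, Wint lam (k + 1) = Ioc 0 1 := by
  refine Subset.antisymm (iUnion_subset fun k => Wint_subset_Ioc h0 h1 (by omega)) fun x hx => ?_
  have hx' := (mem_Ioc_zero_pow_iff h0 h1 (n := 0)).1 (by simpa using hx)
  exact mem_iUnion.2
    ⟨branchIndex lam x - 1, (mem_Wint_iff h0 h1 (by omega)).2 ⟨hx'.1, by omega⟩⟩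

lemma exists_mem_Wint (h0 : 0 < lam) (h1 : lam < 1) (hx : x ∈ Ioc 0 1) :
    ∃ k, 1 ≤ k ∧ x ∈ Wint lam k := by
  obtain ⟨k, hk⟩ := mem_iUnion.1 ((iUnion_Wint h0 h1).symm ▸ hx)
  exact ⟨k + 1, by omega, hk⟩

lemma slopeW_pos (h0 : 0 < lam) (h1 : lam < 1) (n : ℕ) : 0 < slopeW lam n := by
  have : 0 < 1 - lam := by linarith
  unfold slopeW
  split_ifs <;> positivity

lemma Flam_eq_branch (h0 : 0 < lam) (h1 : lam < 1) (hn : 1 ≤ n) (hx : x ∈ Wint lam n) :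
    Flam lam x = branch lam n x := by
  have hxn := ((mem_Wint_iff h0 h1 hn).1 hx).2
  have hx1 := Wint_subset_Ioc h0 h1 hn hx
  rw [Flam, if_pos (show 0 < x ∧ x ≤ 1 from hx1), show sInf {n : ℕ | lam ^ n < x} = n from hxn,
    branch, slopeW]
  split_ifs with h
  · subst h; ring
  · ring

lemma branch_pow_self (n : ℕ) : branch lam n (lam ^ n) = 0 := by
  simp [branch]

lemma branch_pow_pred (h0 : 0 < lam) (h1 : lam < 1) (hn : 1 ≤ n) :
    branch lam n (lam ^ (n - 1)) = lam ^ (n - 2) := by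
  have : 1 - lam ≠ 0 := by linarith
  obtain ⟨k, rfl⟩ := Nat.exists_eq_add_of_le' hn
  rcases k with _ | k
  · simp [branch, slopeW]
    field_simp
  · simp only [branch, slopeW, show k + 1 + 1 - 1 = k + 1 by omega,
      show k + 1 + 1 - 2 = k by omega, if_neg (by omega : k + 1 + 1 ≠ 1)]
    field_simp
    ring

lemma branch_strictMono (h0 : 0 < lam) (h1 : lam < 1) (n : ℕ) : StrictMono (branch lam n) :=
  fun _ _ h => mul_lt_mul_of_pos_left (sub_lt_sub_right h _) (slopeW_pos h0 h1 n)

lemma continuous_branch (n : ℕ) : Continuous (branch lam n) := by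
  unfold branch
  fun_prop

lemma measurableEmbedding_branch (h0 : 0 < lam) (h1 : lam < 1) (n : ℕ) :
    MeasurableEmbedding (branch lam n) :=
  ((Homeomorph.subRight (lam ^ n)).trans
    (Homeomorph.mulLeft₀ _ (slopeW_pos h0 h1 n).ne')).measurableEmbedding

lemma image_branch_Ioc (h0 : 0 < lam) (h1 : lam < 1) (n : ℕ) (a b : ℝ) :
    branch lam n '' Ioc a b = Ioc (branch lam n a) (branch lam n b) := by
  rw [show branch lam n = (slopeW lam n * ·) ∘ (· - lam ^ n) from rfl, image_comp,
    image_sub_const_Ioc, image_mul_left_Ioc (slopeW_pos h0 h1 n)]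
  rfl

lemma image_branch_Wint (h0 : 0 < lam) (h1 : lam < 1) (hn : 1 ≤ n) :
    branch lam n '' Wint lam n = Ioc 0 (lam ^ (n - 2)) := by
  rw [Wint, image_branch_Ioc h0 h1, branch_pow_self, branch_pow_pred h0 h1 hn]

/-- `weight β n` is the ratio `m (W n) / m (F_lam (W n))` for the conformal measure `m`, for which
`m (W n) = (1 - β) * β ^ (n - 1)` and `F_lam (W n) = (0, lam ^ (n - 2)]`. -/
noncomputable def weight (β : ℝ) (n : ℕ) : ℝ := if n = 1 then 1 - β else β * (1 - β)

lemma weight_nonneg (hβ0 : 0 ≤ β) (hβ1 : β ≤ 1) (n : ℕ) : 0 ≤ weight β n := by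
  have : 0 ≤ 1 - β := by linarith
  unfold weight
  split_ifs <;> positivity

lemma weight_pos (hβ0 : 0 < β) (hβ1 : β < 1) (n : ℕ) : 0 < weight β n := by
  have : 0 < 1 - β := by linarith
  unfold weight
  split_ifs <;> positivity

lemma weight_le (β : ℝ) (n : ℕ) : weight β n ≤ 1 - β := by
  unfold weight
  split_ifs <;> nlinarith [sq_nonneg (1 - β)]

lemma weight_mul_pow (hn : 1 ≤ n) : weight β n * β ^ (n - 2) = (1 - β) * β ^ (n - 1) := by
  obtain ⟨k, rfl⟩ := Nat.exists_eq_add_of_le' hn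
  rcases k with _ | k
  · simp [weight]
  · simp only [weight, show k + 1 + 1 - 1 = k + 1 by omega, show k + 1 + 1 - 2 = k by omega,
      if_neg (by omega : k + 1 + 1 ≠ 1)]
    ring

noncomputable def projW (lam : ℝ) (n : ℕ) (x : ℝ) : ℝ :=
  max (lam ^ n) (min x (lam ^ (n - 1)))

lemma projW_of_le (h : x ≤ lam ^ n) : projW lam n x = lam ^ n :=
  max_eq_left ((min_le_left _ _).trans h)

lemma projW_of_ge (h0 : 0 < lam) (h1 : lam < 1) (h : lam ^ (n - 1) ≤ x) :
    projW lam n x = lam ^ (n - 1) := by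
  rw [projW, min_eq_right h, max_eq_right (pow_le_pow_of_le_one h0.le h1.le (Nat.sub_le n 1))]

lemma projW_of_mem (hx : x ∈ Icc (lam ^ n) (lam ^ (n - 1))) : projW lam n x = x := by
  rw [projW, min_eq_left hx.2, max_eq_right hx.1]

lemma projW_le (h0 : 0 < lam) (h1 : lam < 1) (n : ℕ) (x : ℝ) :
    projW lam n x ≤ lam ^ (n - 1) :=
  max_le (pow_le_pow_of_le_one h0.le h1.le (Nat.sub_le n 1)) (min_le_right _ _)

lemma monotone_projW (n : ℕ) : Monotone (projW lam n) :=
  fun _ _ h => max_le_max le_rfl (min_le_min h le_rfl)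

lemma continuous_projW (n : ℕ) : Continuous (projW lam n) := by
  unfold projW
  fun_prop

/-- On the closure of `W k` only the `k`-th term of the series varies, and it reproduces the
self-similarity `G = β ^ k + weight β k * G ∘ branch lam k` (`cdfOp_eq_of_mem_Icc`); the other
terms are constant there, so written this way `cdfOp G` is visibly monotone and continuous. -/
noncomputable def cdfOp (lam β : ℝ) (G : ℝ → ℝ) (x : ℝ) : ℝ :=
  ∑' n, weight β n * G (branch lam n (projW lam n x))

structure IsPinnedCDF (lam β : ℝ) (G : ℝ → ℝ) : Prop where
  monotone : Monotone G
  map_zero : G 0 = 0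
  map_pow : ∀ m : ℕ, G (lam ^ m) = β ^ m

section CdfOp

variable {G G' : ℝ → ℝ} {k : ℕ}

theorem cdfOp_eq_of_mem_Icc (h0 : 0 < lam) (h1 : lam < 1) (hβ0 : 0 ≤ β) (hβ1 : β < 1)
    (hG0 : G 0 = 0) (hG : ∀ m : ℕ, G (lam ^ m) = β ^ m) (hk : 1 ≤ k)
    (hx : x ∈ Icc (lam ^ k) (lam ^ (k - 1))) :
    cdfOp lam β G x = β ^ k + weight β k * G (branch lam k x) := by
  set f := fun n => weight β n * G (branch lam n (projW lam n x))
  have hhead : ∑ n ∈ range (k + 1), f n = weight β k * G (branch lam k x) := by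
    rw [Finset.sum_eq_single k (fun n hn hnk => ?_) (by simp)]
    · simp only [f, projW_of_mem hx]
    have hnk : n ≤ k - 1 := by simp at hn; omega
    simp only [f, projW_of_le (hx.2.trans (pow_le_pow_of_le_one h0.le h1.le hnk)),
      branch_pow_self, hG0, mul_zero]
  have htail : HasSum (fun i => f (i + (k + 1))) (β ^ k) := by
    have hgeom := (hasSum_geometric_of_lt_one hβ0 hβ1).mul_left ((1 - β) * β ^ k)
    rw [show (1 - β) * β ^ k * (1 - β)⁻¹ = β ^ k by field_simp [(by linarith : 1 - β ≠ 0)]]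
      at hgeom
    refine hgeom.congr_fun fun i => ?_
    have hle : lam ^ (i + (k + 1) - 1) ≤ x :=
      (pow_le_pow_of_le_one h0.le h1.le (by omega)).trans hx.1
    simp only [f]
    rw [projW_of_ge h0 h1 hle, branch_pow_pred h0 h1 (by omega), hG, weight_mul_pow (by omega),
      show i + (k + 1) - 1 = i + k by omega, pow_add]
    ring
  refine ((hasSum_nat_add_iff' (k + 1)).1 ?_).tsum_eq
  rwa [hhead, add_sub_cancel_right]

lemma cdfOp_pow (h0 : 0 < lam) (h1 : lam < 1) (hβ0 : 0 ≤ β) (hβ1 : β < 1) (hG0 : G 0 = 0)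
    (hG : ∀ m : ℕ, G (lam ^ m) = β ^ m) (m : ℕ) : cdfOp lam β G (lam ^ m) = β ^ m := by
  have hx : lam ^ m ∈ Icc (lam ^ (m + 1)) (lam ^ (m + 1 - 1)) :=
    ⟨pow_le_pow_of_le_one h0.le h1.le (Nat.le_succ m), by simp⟩
  have hb : branch lam (m + 1) (lam ^ m) = lam ^ (m + 1 - 2) := branch_pow_pred h0 h1 (by omega)
  rw [cdfOp_eq_of_mem_Icc h0 h1 hβ0 hβ1 hG0 hG (by omega) hx, hb, hG, weight_mul_pow (by omega),
    Nat.add_sub_cancel]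
  ring

lemma cdfOp_of_nonpos (h0 : 0 < lam) (hG0 : G 0 = 0) (hx : x ≤ 0) : cdfOp lam β G x = 0 := by
  refine (tsum_congr fun n => ?_).trans tsum_zero
  rw [projW_of_le (hx.trans (pow_pos h0 n).le), branch_pow_self, hG0, mul_zero]

lemma cdfOp_of_one_le (h0 : 0 < lam) (h1 : lam < 1) (hβ0 : 0 ≤ β) (hβ1 : β < 1)
    (hG0 : G 0 = 0) (hG : ∀ m : ℕ, G (lam ^ m) = β ^ m) (hx : 1 ≤ x) :
    cdfOp lam β G x = 1 := by
  have hle (n : ℕ) : lam ^ (n - 1) ≤ 1 := pow_le_one₀ h0.le h1.le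
  have : cdfOp lam β G x = cdfOp lam β G (lam ^ 0) := tsum_congr fun n => by
    rw [projW_of_ge h0 h1 ((hle n).trans hx),
      projW_of_ge h0 h1 ((hle n).trans_eq (pow_zero _).symm)]
  rw [this, cdfOp_pow h0 h1 hβ0 hβ1 hG0 hG, pow_zero]

theorem abs_cdfOp_sub_le (h0 : 0 < lam) (h1 : lam < 1) (hβ0 : 0 ≤ β) (hβ1 : β < 1)
    (hG : IsPinnedCDF lam β G) (hG' : IsPinnedCDF lam β G') {d : ℝ}
    (hd : ∀ y, |G y - G' y| ≤ d) (x : ℝ) :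
    |cdfOp lam β G x - cdfOp lam β G' x| ≤ (1 - β) * d := by
  have hd0 : 0 ≤ (1 - β) * d := mul_nonneg (by linarith) ((abs_nonneg _).trans (hd 0))
  rcases le_or_gt x 0 with hx0 | hx0
  · rwa [cdfOp_of_nonpos h0 hG.map_zero hx0, cdfOp_of_nonpos h0 hG'.map_zero hx0, sub_self,
      abs_zero]
  rcases le_or_gt 1 x with hx1 | hx1
  · rwa [cdfOp_of_one_le h0 h1 hβ0 hβ1 hG.map_zero hG.map_pow hx1,
      cdfOp_of_one_le h0 h1 hβ0 hβ1 hG'.map_zero hG'.map_pow hx1, sub_self, abs_zero]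
  obtain ⟨k, hk, hxk⟩ := exists_mem_Wint h0 h1 ⟨hx0, hx1.le⟩
  have hx := Ioc_subset_Icc_self hxk
  rw [cdfOp_eq_of_mem_Icc h0 h1 hβ0 hβ1 hG.map_zero hG.map_pow hk hx,
    cdfOp_eq_of_mem_Icc h0 h1 hβ0 hβ1 hG'.map_zero hG'.map_pow hk hx,
    add_sub_add_left_eq_sub, ← mul_sub, abs_mul, abs_of_nonneg (weight_nonneg hβ0 hβ1.le k)]
  exact mul_le_mul (weight_le β k) (hd _) (abs_nonneg _) (by linarith)

lemma IsPinnedCDF.cdfOp_term_mem (h0 : 0 < lam) (h1 : lam < 1) (hβ0 : 0 ≤ β) (hβ1 : β < 1)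
    (hG : IsPinnedCDF lam β G) (n : ℕ) (x : ℝ) :
    weight β n * G (branch lam n (projW lam n x)) ∈ Icc 0 (β ^ (n - 2)) := by
  have hmono := (branch_strictMono h0 h1 n).monotone
  have hlo : 0 ≤ G (branch lam n (projW lam n x)) :=
    hG.map_zero ▸ hG.monotone (branch_pow_self (lam := lam) n ▸ hmono (le_max_left _ _))
  have hhi : G (branch lam n (projW lam n x)) ≤ β ^ (n - 2) := by
    refine (hG.monotone (hmono (projW_le h0 h1 n x))).trans ?_
    rcases Nat.eq_zero_or_pos n with rfl | hn
    · simp [branch, hG.map_zero]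
    · rw [branch_pow_pred h0 h1 hn, hG.map_pow]
  have hw1 : weight β n ≤ 1 := (weight_le β n).trans (by linarith)
  exact ⟨mul_nonneg (weight_nonneg hβ0 hβ1.le n) hlo,
    (mul_le_mul hw1 hhi hlo zero_le_one).trans_eq (one_mul _)⟩

lemma IsPinnedCDF.summable_cdfOp_term (h0 : 0 < lam) (h1 : lam < 1) (hβ0 : 0 ≤ β)
    (hβ1 : β < 1) (hG : IsPinnedCDF lam β G) (x : ℝ) :
    Summable fun n => weight β n * G (branch lam n (projW lam n x)) :=
  (summable_pow_sub_two hβ0 hβ1).of_nonneg_of_le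
    (fun n => (hG.cdfOp_term_mem h0 h1 hβ0 hβ1 n x).1)
    fun n => (hG.cdfOp_term_mem h0 h1 hβ0 hβ1 n x).2

lemma IsPinnedCDF.monotone_cdfOp (h0 : 0 < lam) (h1 : lam < 1) (hβ0 : 0 ≤ β) (hβ1 : β < 1)
    (hG : IsPinnedCDF lam β G) : Monotone (cdfOp lam β G) := fun x y hxy =>
  (hG.summable_cdfOp_term h0 h1 hβ0 hβ1 x).tsum_le_tsum (fun n =>
    mul_le_mul_of_nonneg_left (hG.monotone ((branch_strictMono h0 h1 n).monotone
      (monotone_projW n hxy))) (weight_nonneg hβ0 hβ1.le n))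
    (hG.summable_cdfOp_term h0 h1 hβ0 hβ1 y)

lemma IsPinnedCDF.continuous_cdfOp (h0 : 0 < lam) (h1 : lam < 1) (hβ0 : 0 ≤ β) (hβ1 : β < 1)
    (hG : IsPinnedCDF lam β G) (hc : Continuous G) : Continuous (cdfOp lam β G) :=
  continuous_tsum (fun n => continuous_const.mul
      (hc.comp ((continuous_branch n).comp (continuous_projW n))))
    (summable_pow_sub_two hβ0 hβ1) fun n x => by
      obtain ⟨hlo, hhi⟩ := hG.cdfOp_term_mem h0 h1 hβ0 hβ1 n x
      rwa [Real.norm_eq_abs, abs_of_nonneg hlo]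

lemma isPinnedCDF_cdfOp (h0 : 0 < lam) (h1 : lam < 1) (hβ0 : 0 ≤ β) (hβ1 : β < 1)
    (hG : IsPinnedCDF lam β G) : IsPinnedCDF lam β (cdfOp lam β G) :=
  ⟨hG.monotone_cdfOp h0 h1 hβ0 hβ1, cdfOp_of_nonpos h0 hG.map_zero le_rfl,
    cdfOp_pow h0 h1 hβ0 hβ1 hG.map_zero hG.map_pow⟩

lemma IsPinnedCDF.cdfOp_mem_Icc (h0 : 0 < lam) (h1 : lam < 1) (hβ0 : 0 ≤ β) (hβ1 : β < 1)
    (hG : IsPinnedCDF lam β G) (x : ℝ) : cdfOp lam β G x ∈ Icc 0 1 := by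
  have hmono := hG.monotone_cdfOp h0 h1 hβ0 hβ1
  refine ⟨?_, ?_⟩
  · exact (cdfOp_of_nonpos h0 hG.map_zero (min_le_right x 0)).symm.trans_le
      (hmono (min_le_left x 0))
  · exact (hmono (le_max_left x 1)).trans_eq
      (cdfOp_of_one_le h0 h1 hβ0 hβ1 hG.map_zero hG.map_pow (le_max_right x 1))

end CdfOp

section FixedPoint

open BoundedContinuousFunction

lemma isClosed_setOf_isPinnedCDF : IsClosed {G : ℝ →ᵇ ℝ | IsPinnedCDF lam β G} := by
  have hev (x : ℝ) : Continuous fun G : ℝ →ᵇ ℝ => G x :=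
    (continuous_apply x).comp continuous_coe
  have : {G : ℝ →ᵇ ℝ | IsPinnedCDF lam β G} = (⇑) ⁻¹' {G : ℝ → ℝ | Monotone G} ∩
      {G | G 0 = 0} ∩ ⋂ m : ℕ, {G | G (lam ^ m) = β ^ m} := by
    ext G
    simp only [mem_ofPred_eq, mem_inter_iff, mem_preimage, mem_iInter]
    exact ⟨fun h => ⟨⟨h.monotone, h.map_zero⟩, h.map_pow⟩, fun h => ⟨h.1.1, h.1.2, h.2⟩⟩
  rw [this]
  exact ((isClosed_monotone.preimage continuous_coe).inter
    (isClosed_eq (hev 0) continuous_const)).inter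
    (isClosed_iInter fun m => isClosed_eq (hev _) continuous_const)

lemma exists_isPinnedCDF (h0 : 0 < lam) (h1 : lam < 1) (hβ0 : 0 < β) (hβ1 : β < 1) :
    ∃ G : ℝ →ᵇ ℝ, IsPinnedCDF lam β G := by
  set s := Real.logb lam β
  have hs : 0 < s := Real.logb_pos_of_base_lt_one h0 h1 hβ0 hβ1
  set g : ℝ → ℝ := fun x => max 0 (min x 1) ^ s
  have hg : Continuous g :=
    (continuous_const.max (continuous_id.min continuous_const)).rpow_const
      fun _ => Or.inr hs.le
  have hg01 (x : ℝ) : g x ∈ Icc 0 1 :=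
    ⟨Real.rpow_nonneg (le_max_left _ _) _,
      Real.rpow_le_one (le_max_left _ _) (max_le zero_le_one (min_le_right _ _)) hs.le⟩
  refine ⟨mkOfBound ⟨g, hg⟩ 1 fun x y => Real.dist_le_of_mem_Icc_01 (hg01 x) (hg01 y),
    fun x y hxy => ?_, ?_, fun m => ?_⟩
  · exact Real.rpow_le_rpow (le_max_left _ _) (max_le_max le_rfl (min_le_min hxy le_rfl)) hs.le
  · simp [g, Real.zero_rpow hs.ne']
  · have hm : max 0 (min (lam ^ m) 1) = lam ^ m := by
      rw [min_eq_left (pow_le_one₀ h0.le h1.le), max_eq_right (pow_pos h0 m).le]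
    change max 0 (min (lam ^ m) 1) ^ s = β ^ m
    rw [hm, ← Real.rpow_pow_comm h0.le, Real.rpow_logb h0 h1.ne hβ0]

theorem exists_fixedPoint_cdfOp (h0 : 0 < lam) (h1 : lam < 1) (hβ0 : 0 < β) (hβ1 : β < 1) :
    ∃ G : StieltjesFunction ℝ, IsPinnedCDF lam β G ∧ cdfOp lam β G = G := by
  set S := {G : ℝ →ᵇ ℝ | IsPinnedCDF lam β G}
  have : IsClosed S := isClosed_setOf_isPinnedCDF
  have : CompleteSpace S := IsClosed.completeSpace_coe
  obtain ⟨G₀, hG₀⟩ := exists_isPinnedCDF h0 h1 hβ0 hβ1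
  have : Nonempty S := ⟨⟨G₀, hG₀⟩⟩
  let T : S → S := fun G =>
    ⟨mkOfBound ⟨cdfOp lam β G, G.2.continuous_cdfOp h0 h1 hβ0.le hβ1 G.1.continuous⟩ 1
      fun x y => Real.dist_le_of_mem_Icc_01 (G.2.cdfOp_mem_Icc h0 h1 hβ0.le hβ1 x)
        (G.2.cdfOp_mem_Icc h0 h1 hβ0.le hβ1 y),
      isPinnedCDF_cdfOp h0 h1 hβ0.le hβ1 G.2⟩
  have hT : ContractingWith (1 - β).toNNReal T := by
    refine ⟨Real.toNNReal_lt_one.2 (by linarith), LipschitzWith.of_dist_le_mul fun G G' => ?_⟩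
    rw [Real.coe_toNNReal _ (by linarith), Subtype.dist_eq, Subtype.dist_eq,
      dist_le (mul_nonneg (by linarith) dist_nonneg)]
    exact abs_cdfOp_sub_le h0 h1 hβ0.le hβ1 G.2 G'.2
      fun y => dist_coe_le_dist (f := G.1) (g := G'.1) y
  set G := ContractingWith.fixedPoint T hT
  exact ⟨⟨G.1, G.2.monotone, fun x => G.1.continuous.continuousWithinAt⟩, G.2,
    congrArg (fun H : S => ⇑(H : ℝ →ᵇ ℝ)) hT.fixedPoint_isFixedPt⟩

end FixedPoint

section ConformalMeasure

variable {G : StieltjesFunction ℝ}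

lemma apply_eq_zero_of_cdfOp_eq (h0 : 0 < lam) (hG : IsPinnedCDF lam β G)
    (hfix : cdfOp lam β G = G) (hx : x ≤ 0) : G x = 0 :=
  hfix ▸ cdfOp_of_nonpos h0 hG.map_zero hx

lemma apply_eq_one_of_cdfOp_eq (h0 : 0 < lam) (h1 : lam < 1) (hβ0 : 0 ≤ β) (hβ1 : β < 1)
    (hG : IsPinnedCDF lam β G) (hfix : cdfOp lam β G = G) (hx : 1 ≤ x) : G x = 1 :=
  hfix ▸ cdfOp_of_one_le h0 h1 hβ0 hβ1 hG.map_zero hG.map_pow hx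

lemma isProbabilityMeasure_of_cdfOp_eq (h0 : 0 < lam) (h1 : lam < 1) (hβ0 : 0 ≤ β)
    (hβ1 : β < 1) (hG : IsPinnedCDF lam β G) (hfix : cdfOp lam β G = G) :
    IsProbabilityMeasure G.measure := by
  refine G.isProbabilityMeasure (tendsto_const_nhds.congr' ?_) (tendsto_const_nhds.congr' ?_)
  · filter_upwards [eventually_le_atBot 0] with x hx
    exact (apply_eq_zero_of_cdfOp_eq h0 hG hfix hx).symm
  · filter_upwards [eventually_ge_atTop 1] with x hx
    exact (apply_eq_one_of_cdfOp_eq h0 h1 hβ0 hβ1 hG hfix hx).symm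

lemma measure_Ioc_zero_one_of_cdfOp_eq (h0 : 0 < lam) (h1 : lam < 1) (hβ0 : 0 ≤ β)
    (hβ1 : β < 1) (hG : IsPinnedCDF lam β G) (hfix : cdfOp lam β G = G) :
    G.measure (Ioc 0 1) = 1 := by
  rw [G.measure_Ioc, apply_eq_one_of_cdfOp_eq h0 h1 hβ0 hβ1 hG hfix le_rfl, hG.map_zero]
  simp

lemma IsPinnedCDF.measure_Wint {k : ℕ} (hG : IsPinnedCDF lam β G) (hk : 1 ≤ k) :
    G.measure (Wint lam k) = ENNReal.ofReal ((1 - β) * β ^ (k - 1)) := by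
  obtain ⟨j, rfl⟩ := Nat.exists_eq_add_of_le' hk
  rw [Wint, G.measure_Ioc, hG.map_pow, hG.map_pow, Nat.add_sub_cancel, pow_succ]
  ring_nf

theorem measure_image_branch_of_cdfOp_eq (h0 : 0 < lam) (h1 : lam < 1) (hβ0 : 0 < β)
    (hβ1 : β < 1) (hG : IsPinnedCDF lam β G) (hfix : cdfOp lam β G = G) (hn : 1 ≤ n)
    {A : Set ℝ} (hA : A ⊆ Wint lam n) :
    G.measure (branch lam n '' A) = ENNReal.ofReal (weight β n)⁻¹ * G.measure A := by
  have := isProbabilityMeasure_of_cdfOp_eq h0 h1 hβ0.le hβ1 hG hfix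
  have hW := measurableSet_Wint lam n
  have hemb := measurableEmbedding_branch h0 h1 n
  have hFE (y : ℝ) (hy : y ∈ Icc (lam ^ n) (lam ^ (n - 1))) :
      G y = β ^ n + weight β n * G (branch lam n y) := by
    rw [← cdfOp_eq_of_mem_Icc h0 h1 hβ0.le hβ1 hG.map_zero hG.map_pow hn hy, hfix]
  have key : (G.measure.comap (branch lam n)).restrict (Wint lam n) =
      ENNReal.ofReal (weight β n)⁻¹ • G.measure.restrict (Wint lam n) := by
    refine Measure.ext_of_Ioc' _ _ (fun a b _ => ?_) (fun a b _ => ?_)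
    · rw [Measure.restrict_apply' hW, hemb.comap_apply]
      exact measure_ne_top _ _
    rw [Measure.restrict_apply' hW, hemb.comap_apply, Measure.smul_apply,
      Measure.restrict_apply' hW, smul_eq_mul, Wint, Ioc_inter_Ioc, image_branch_Ioc h0 h1]
    set p := max a (lam ^ n)
    set q := min b (lam ^ (n - 1))
    rcases le_or_gt q p with hqp | hpq
    · simp [Ioc_eq_empty_of_le hqp, Ioc_eq_empty_of_le ((branch_strictMono h0 h1 n).monotone hqp)]
    have hp : p ∈ Icc (lam ^ n) (lam ^ (n - 1)) :=
      ⟨le_max_right _ _, hpq.le.trans (min_le_right _ _)⟩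
    have hq : q ∈ Icc (lam ^ n) (lam ^ (n - 1)) :=
      ⟨(le_max_right _ _).trans hpq.le, min_le_right _ _⟩
    have hw := weight_pos hβ0 hβ1 n
    rw [G.measure_Ioc, G.measure_Ioc, ← ENNReal.ofReal_mul (inv_nonneg.2 hw.le), hFE p hp,
      hFE q hq]
    congr 1
    field_simp
    ring
  simpa [Measure.restrict_apply' hW, inter_eq_self_of_subset_left hA, hemb.comap_apply] using
    congrArg (fun μ : Measure ℝ => μ A) key

end ConformalMeasure

section InvariantMeasure

variable {m : Measure ℝ} {A : Set ℝ}

noncomputable def invariantDensity (β : ℝ) (n : ℕ) : ℝ := (1 - 2 * β) / (1 - β) ^ (n + 1)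

noncomputable def invariantMeasure (lam β : ℝ) (m : Measure ℝ) : Measure ℝ :=
  Measure.sum fun k =>
    ENNReal.ofReal (invariantDensity β (k + 1)) • m.restrict (Wint lam (k + 1))

lemma invariantMeasure_apply (s : Set ℝ) : invariantMeasure lam β m s =
    ∑' k, ENNReal.ofReal (invariantDensity β (k + 1)) * m (s ∩ Wint lam (k + 1)) := by
  simp only [invariantMeasure, Measure.sum_apply_of_countable, Measure.smul_apply, smul_eq_mul,
    Measure.restrict_apply' (measurableSet_Wint _ _)]

lemma invariantMeasure_absolutelyContinuous : invariantMeasure lam β m ≪ m :=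
  Measure.absolutelyContinuous_sum_left fun _ =>
    (Measure.absolutelyContinuous_of_le Measure.restrict_le_self).smul_left _

lemma sum_invariantDensity_mul_weight (hβ1 : β < 1) (k : ℕ) :
    ∑ n ∈ range (k + 1), invariantDensity β (n + 1) * weight β (n + 1) =
      invariantDensity β k := by
  have : 1 - β ≠ 0 := by linarith
  induction k with
  | zero =>
    norm_num [invariantDensity, weight]
    field_simp
  | succ k ih =>
    rw [Finset.sum_range_succ, ih]
    simp only [invariantDensity, weight, if_neg (by omega : k + 1 + 1 ≠ 1)]
    field_simp
    ring

lemma invariantMeasure_Wint (h0 : 0 < lam) (h1 : lam < 1) (hβ0 : 0 < β) (hβ1 : β < 1)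
    (hm : ∀ k, 1 ≤ k → m (Wint lam k) = ENNReal.ofReal ((1 - β) * β ^ (k - 1))) {j : ℕ}
    (hj : 1 ≤ j) : invariantMeasure lam β m (Wint lam j) =
      ENNReal.ofReal ((1 - 2 * β) / β * (β / (1 - β)) ^ j) := by
  obtain ⟨i, rfl⟩ := Nat.exists_eq_add_of_le' hj
  rw [invariantMeasure_apply, tsum_eq_single i fun k hk => by
    rw [(pairwise_disjoint_Wint h0 h1 (Ne.symm hk)).inter_eq, measure_empty, mul_zero],
    inter_self, hm _ hj, ← ENNReal.ofReal_mul' (mul_nonneg (by linarith) (pow_nonneg hβ0.le _))]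
  congr 1
  have : 1 - β ≠ 0 := by linarith
  simp only [invariantDensity, Nat.add_sub_cancel, div_pow]
  field_simp
  ring

lemma invariantMeasure_eq_one_of_Wint_subset (hβ0 : 0 < β) (hβ : β < 1 / 2)
    (hm : ∀ k, 1 ≤ k → m (Wint lam k) = ENNReal.ofReal ((1 - β) * β ^ (k - 1))) {S : Set ℝ}
    (hS : ∀ k, Wint lam (k + 1) ⊆ S) : invariantMeasure lam β m S = 1 := by
  have h1β : 0 < 1 - β := by linarith
  have h12β : 0 < 1 - 2 * β := by linarith
  set r := β / (1 - β)
  have hr0 : 0 ≤ r := by positivity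
  have hr1 : r < 1 := (div_lt_one h1β).2 (by linarith)
  have hterm (k : ℕ) :
      ENNReal.ofReal (invariantDensity β (k + 1)) * m (S ∩ Wint lam (k + 1)) =
        ENNReal.ofReal ((1 - 2 * β) / (1 - β) * r ^ k) := by
    rw [inter_eq_right.2 (hS k), hm _ (by omega),
      ← ENNReal.ofReal_mul' (by have := pow_pos hβ0 k; positivity)]
    congr 1
    simp only [invariantDensity, Nat.add_sub_cancel, r, div_pow]
    field_simp
    ring
  have h1r : 1 - r = (1 - 2 * β) / (1 - β) := by
    rw [show r = β / (1 - β) from rfl]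
    field_simp
    ring
  rw [invariantMeasure_apply, tsum_congr hterm, ← ENNReal.ofReal_tsum_of_nonneg
    (fun k => by positivity) ((summable_geometric_of_lt_one hr0 hr1).mul_left _), tsum_mul_left,
    tsum_geometric_of_lt_one hr0 hr1, h1r, mul_inv_cancel₀ (by positivity), ENNReal.ofReal_one]

lemma measure_inter_preimage_Flam (h0 : 0 < lam) (h1 : lam < 1) (hβ0 : 0 < β) (hβ1 : β < 1)
    (hconf : ∀ n, 1 ≤ n → ∀ A, MeasurableSet A → A ⊆ Wint lam n →
      m (branch lam n '' A) = ENNReal.ofReal (weight β n)⁻¹ * m A)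
    (hn : 1 ≤ n) (hA : MeasurableSet A) :
    m (Flam lam ⁻¹' A ∩ Wint lam n) =
      ENNReal.ofReal (weight β n) * m (A ∩ Ioc 0 (lam ^ (n - 2))) := by
  have hset : Flam lam ⁻¹' A ∩ Wint lam n = Wint lam n ∩ branch lam n ⁻¹' A := by
    ext x
    simp only [mem_inter_iff, mem_preimage]
    exact ⟨fun ⟨hA, hx⟩ => ⟨hx, Flam_eq_branch h0 h1 hn hx ▸ hA⟩,
      fun ⟨hx, hA⟩ => ⟨(Flam_eq_branch h0 h1 hn hx).symm ▸ hA, hx⟩⟩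
  have himg :
      branch lam n '' (Wint lam n ∩ branch lam n ⁻¹' A) = A ∩ Ioc 0 (lam ^ (n - 2)) := by
    rw [image_inter_preimage, image_branch_Wint h0 h1 hn, inter_comm]
  have hmeas := (measurableSet_Wint lam n).inter ((continuous_branch (lam := lam) n).measurable hA)
  have hw := weight_pos hβ0 hβ1 n
  rw [hset, ← himg, hconf n hn _ hmeas inter_subset_left, ← mul_assoc,
    ← ENNReal.ofReal_mul hw.le, mul_inv_cancel₀ hw.ne', ENNReal.ofReal_one, one_mul]

lemma measure_inter_Ioc_zero_pow (h0 : 0 < lam) (h1 : lam < 1) (hA : MeasurableSet A) (n : ℕ) :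
    m (A ∩ Ioc 0 (lam ^ (n - 1))) =
      ∑' k, if n ≤ k + 1 then m (A ∩ Wint lam (k + 1)) else 0 := by
  have hsplit :
      A ∩ Ioc 0 (lam ^ (n - 1)) = ⋃ k, A ∩ Ioc 0 (lam ^ (n - 1)) ∩ Wint lam (k + 1) := by
    rw [← inter_iUnion, iUnion_Wint h0 h1]
    exact (inter_eq_left.2 (inter_subset_right.trans
      (Ioc_subset_Ioc_right (pow_le_one₀ h0.le h1.le)))).symm
  rw [hsplit, measure_iUnion (fun i j hij => ((pairwise_disjoint_Wint h0 h1 hij).mono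
    inter_subset_right inter_subset_right))
    fun k => (hA.inter measurableSet_Ioc).inter (measurableSet_Wint _ _)]
  refine tsum_congr fun k => ?_
  split_ifs with h
  · rw [inter_assoc, inter_eq_right.2 (Wint_subset_Ioc_zero_pow h0 h1 (by omega))]
  · rw [inter_assoc, (disjoint_Wint_Ioc_zero_pow h0 h1 (by omega) (by omega)).symm.inter_eq,
      inter_empty, measure_empty]

theorem invariantMeasure_preimage_Flam (h0 : 0 < lam) (h1 : lam < 1) (hβ0 : 0 < β)
    (hβ : β < 1 / 2) (hconf : ∀ n, 1 ≤ n → ∀ A, MeasurableSet A → A ⊆ Wint lam n →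
      m (branch lam n '' A) = ENNReal.ofReal (weight β n)⁻¹ * m A) (hA : MeasurableSet A) :
    invariantMeasure lam β m (Flam lam ⁻¹' A) = invariantMeasure lam β m A := by
  have hβ1 : β < 1 := by linarith
  have hρ (n : ℕ) : 0 ≤ invariantDensity β n :=
    div_nonneg (by linarith) (pow_nonneg (by linarith) _)
  simp only [invariantMeasure_apply]
  calc ∑' n, ENNReal.ofReal (invariantDensity β (n + 1)) * m (Flam lam ⁻¹' A ∩ Wint lam (n + 1))
      = ∑' n, ENNReal.ofReal (invariantDensity β (n + 1) * weight β (n + 1)) *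
          ∑' k, (if n ≤ k + 1 then m (A ∩ Wint lam (k + 1)) else 0) := tsum_congr fun n => by
        rw [measure_inter_preimage_Flam h0 h1 hβ0 hβ1 hconf (by omega) hA,
          show n + 1 - 2 = n - 1 by omega, measure_inter_Ioc_zero_pow h0 h1 hA, ← mul_assoc,
          ENNReal.ofReal_mul (hρ _)]
    _ = ∑' k, ENNReal.ofReal (invariantDensity β (k + 1)) * m (A ∩ Wint lam (k + 1)) := by
        rw [ENNReal.tsum_mul_tsum_ite_le_add_one]
        refine tsum_congr fun k => ?_
        rw [← ENNReal.ofReal_sum_of_nonneg fun n _ => mul_nonneg (hρ _)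
          (weight_nonneg hβ0.le hβ1.le _), sum_invariantDensity_mul_weight hβ1 (k + 1)]

end InvariantMeasure

lemma exp_log_mul_slopeW_rpow (h0 : 0 < lam) (h1 : lam < 1) {t : ℝ} (ht : 0 < t) (n : ℕ) :
    Real.exp (Real.log ((1 - lam) ^ t / (1 - lam ^ t))) * slopeW lam n ^ t =
      (weight (lam ^ t) n)⁻¹ := by
  have h1l : 0 < 1 - lam := by linarith
  have hlt : 0 < 1 - lam ^ t := by linarith [Real.rpow_lt_one h0.le h1 ht]
  have := Real.rpow_pos_of_pos h0 t
  have := Real.rpow_pos_of_pos h1l t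
  rw [Real.exp_log (by positivity), slopeW, weight]
  split_ifs
  · rw [one_div, Real.inv_rpow h1l.le]
    field_simp
  · rw [one_div, Real.inv_rpow (by positivity), Real.mul_rpow h0.le h1l.le]
    field_simp

lemma rpow_pow_sub_one (h0 : 0 < lam) (t : ℝ) {k : ℕ} (hk : 1 ≤ k) :
    (lam ^ t) ^ (k - 1) = lam ^ (t * ((k : ℝ) - 1)) := by
  rw [Real.rpow_mul h0.le, ← Real.rpow_natCast, Nat.cast_sub hk, Nat.cast_one]

end Flam

open Flam in
/-- For `lam^t < 1/2` there exist a `(t, log ψ(t))`-conformal Borel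
probability measure `m` with `m(W k) = (1-lam^t) lam^(t(k-1))`, and an
`F_lam`-invariant Borel probability measure `μ ≪ m` with
`μ(W j) = ((1-2 lam^t)/lam^t) (lam^t/(1-lam^t))^j` for all `j ≥ 1`. -/
theorem stmt9 (lam t : ℝ) (h1 : 0 < lam) (h2 : lam < 1) (ht : 0 < t)
    (hl : lam ^ t < 1/2) :
    ∃ m μ : Measure ℝ,
      IsProbabilityMeasure m ∧ m (Set.Ioc 0 1) = 1 ∧
      IsConformal lam t (Real.log ((1-lam)^t / (1 - lam^t))) m ∧
      (∀ k : ℕ, 1 ≤ k → m (Wint lam k) =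
        ENNReal.ofReal ((1 - lam^t) * lam ^ (t * ((k:ℝ) - 1)))) ∧
      IsProbabilityMeasure μ ∧ μ (Set.Ioc 0 1) = 1 ∧
      (∀ A : Set ℝ, MeasurableSet A → μ (Flam lam ⁻¹' A) = μ A) ∧
      μ ≪ m ∧
      ∀ j : ℕ, 1 ≤ j → μ (Wint lam j) =
        ENNReal.ofReal ((1 - 2*lam^t)/lam^t * (lam^t/(1-lam^t))^j) := by
  have hβ0 : 0 < lam ^ t := Real.rpow_pos_of_pos h1 t
  have hβ1 : lam ^ t < 1 := by linarith
  obtain ⟨G, hG, hfix⟩ := exists_fixedPoint_cdfOp h1 h2 hβ0 hβ1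
  have hconf (n : ℕ) (hn : 1 ≤ n) (A : Set ℝ) (_ : MeasurableSet A) (hA : A ⊆ Wint lam n) :=
    measure_image_branch_of_cdfOp_eq h1 h2 hβ0 hβ1 hG hfix hn hA
  have hmW (k : ℕ) (hk : 1 ≤ k) := hG.measure_Wint (G := G) hk
  refine ⟨G.measure, invariantMeasure lam (lam ^ t) G.measure,
    isProbabilityMeasure_of_cdfOp_eq h1 h2 hβ0.le hβ1 hG hfix,
    measure_Ioc_zero_one_of_cdfOp_eq h1 h2 hβ0.le hβ1 hG hfix, fun n hn A hAm hA => ?_,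
    fun k hk => by rw [hmW k hk, rpow_pow_sub_one h1 t hk],
    ⟨invariantMeasure_eq_one_of_Wint_subset hβ0 hl hmW fun _ => subset_univ _⟩,
    invariantMeasure_eq_one_of_Wint_subset hβ0 hl hmW fun k => Wint_subset_Ioc h1 h2 (by omega),
    fun A hA => invariantMeasure_preimage_Flam h1 h2 hβ0 hl hconf hA,
    invariantMeasure_absolutelyContinuous, fun j hj => invariantMeasure_Wint h1 h2 hβ0 hβ1 hmW hj⟩
  rw [image_congr fun x hx => Flam_eq_branch h1 h2 hn (hA hx), exp_log_mul_slopeW_rpow h1 h2 ht,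
    hconf n hn A hAm hA]
end

section
/- Let λ ∈ (0,1) and t > 0 with λ^t = 1/2, and let m_t be the (t, log ψ(t))-conformal Borel probability measure on (0,1] with m_t(W_k) = (1/2)^k for all k ≥ 1, where ψ(t) = (1−λ)^t/(1−λ^t). Then m_t is conservative for F_λ, but there exists no F_λ-invariant Borel probability measure that is absolutely continuous with respect to m_t; that is, the system ((0,1], F_λ, −t log|F_λ'|) is null recurrent. -/
open MeasureTheory Set Filter Topology

/-!
By conformality, `F_λ` multiplies the `m`-measure of subsets of `W 1` by `2` and of subsets of
`W n`, `n ≥ 2`, by `4`, while it maps `W (k + 1)` onto `(0, λ^(k-1)]`. Hence the density of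
`m ∘ F_λ^{-j}` with respect to `m` is constant on each `W k`, equal to `C(k + 2j, j) / 4^j`: the
induction step is the hockey-stick identity. This density is at least `1 / (2(j + 1))`, so the
preimages of a set of positive measure have measures with divergent sum, which is impossible for a
wandering set. It is also at most `2^k C(2j, j) / 4^j → 0`, so an invariant `μ ≪ m` would satisfy
`μ (W k) = μ (F_λ^{-j} (W k)) → 0` for every `k`, i.e. `μ (0, 1] = 0`.
-/

open scoped ENNReal

namespace MeasureTheory

variable {α : Type*} [MeasurableSpace α] {f : α → α} {μ ν : Measure α}

theorem tsum_measure_preimage_iterate_ne_top [IsFiniteMeasure ν] (hf : Measurable f)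
    {A : Set α} (hA : MeasurableSet A)
    (hw : Pairwise fun i j : ℕ => Disjoint (f^[i] ⁻¹' A) (f^[j] ⁻¹' A)) :
    ∑' i, ν (f^[i] ⁻¹' A) ≠ ∞ := by
  rw [← measure_iUnion hw fun i => hf.iterate i hA]
  exact measure_ne_top ν _

theorem Measure.AbsolutelyContinuous.tendsto_measure_nhds_zero [IsFiniteMeasure μ]
    [SigmaFinite ν] (h : μ ≪ ν) {ι : Type*} {l : Filter ι} {s : ι → Set α}
    (hs : Tendsto (ν ∘ s) l (𝓝 0)) : Tendsto (μ ∘ s) l (𝓝 0) := by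
  rw [← Measure.withDensity_rnDeriv_eq μ ν h]
  simpa only [Function.comp_def, withDensity_apply'] using
    tendsto_setLIntegral_zero (lintegral_rnDeriv_lt_top μ ν).ne hs

theorem MeasurePreserving.measure_eq_zero_of_tendsto_measure_preimage_iterate
    [IsFiniteMeasure μ] [SigmaFinite ν] (hf : MeasurePreserving f μ μ) (hμν : μ ≪ ν)
    {C : Set α} (hC : MeasurableSet C)
    (h : Tendsto (fun j => ν (f^[j] ⁻¹' C)) atTop (𝓝 0)) : μ C = 0 := by
  have hconst : (μ ∘ fun j => f^[j] ⁻¹' C) = fun _ => μ C :=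
    funext fun j => (hf.iterate j).measure_preimage hC.nullMeasurableSet
  have := hμν.tendsto_measure_nhds_zero (s := fun j => f^[j] ⁻¹' C) h
  rw [hconst] at this
  exact tendsto_nhds_unique tendsto_const_nhds this

end MeasureTheory

theorem ENNReal.tsum_inv_natCast_succ_eq_top : ∑' n : ℕ, ((n + 1 : ℕ) : ℝ≥0∞)⁻¹ = ∞ := by
  have hcoe : ∀ n : ℕ, ((n + 1 : ℕ) : ℝ≥0∞)⁻¹ = (((n + 1 : ℕ) : NNReal)⁻¹ : NNReal) := fun n => by
    rw [ENNReal.coe_inv (by positivity)]; rfl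
  by_contra hne
  rw [tsum_congr hcoe, ← Ne, ENNReal.tsum_coe_ne_top_iff_summable, ← NNReal.summable_coe] at hne
  exact Real.not_summable_natCast_inv
    ((summable_nat_add_iff 1).1 (hne.congr fun n => by push_cast; rfl))

theorem Real.image_sub_div_Ioc {a b c d : ℝ} (hd : 0 < d) :
    (fun x => (x - c) / d) '' Ioc a b = Ioc ((a - c) / d) ((b - c) / d) := by
  convert image_affine_Ioc (inv_pos.2 hd) (-c / d) a b using 2
  all_goals first | rfl | ring

namespace Nat

theorem choose_add_le_two_pow_mul_centralBinom (l j : ℕ) :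
    (l + 2 * j).choose j ≤ 2 ^ l * centralBinom j := by
  induction l with
  | zero => simp [centralBinom_eq_two_mul_choose]
  | succ l ih =>
    have hstep : (l + 1 + 2 * j).choose j ≤ 2 * (l + 2 * j).choose j := by
      cases j with
      | zero => simp
      | succ i =>
        have := choose_le_succ_of_lt_half_left (r := i) (n := l + 2 * (i + 1)) (by omega)
        rw [show l + 1 + 2 * (i + 1) = l + 2 * (i + 1) + 1 by ring, choose_succ_succ']
        omega
    calc (l + 1 + 2 * j).choose j ≤ 2 * (2 ^ l * centralBinom j) := hstep.trans (by omega)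
      _ = 2 ^ (l + 1) * centralBinom j := by ring

theorem four_pow_le_two_mul_succ_mul_centralBinom (j : ℕ) :
    4 ^ j ≤ 2 * (j + 1) * centralBinom j := by
  rcases j.eq_zero_or_pos with rfl | hj
  · simp
  · exact (four_pow_le_two_mul_self_mul_centralBinom j hj).trans
      (Nat.mul_le_mul_right _ (by omega))

theorem centralBinom_sq_mul_le (j : ℕ) : centralBinom j ^ 2 * (2 * j + 1) ≤ 16 ^ j := by
  induction j with
  | zero => simp
  | succ i ih =>
    have hrec := succ_mul_centralBinom_succ i
    refine Nat.le_of_mul_le_mul_left ?_ (show 0 < (i + 1) ^ 2 by positivity)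
    calc (i + 1) ^ 2 * (centralBinom (i + 1) ^ 2 * (2 * (i + 1) + 1))
        = 4 * ((2 * i + 1) * (2 * i + 3)) * (centralBinom i ^ 2 * (2 * i + 1)) := by
          rw [show (i + 1) ^ 2 * (centralBinom (i + 1) ^ 2 * (2 * (i + 1) + 1))
            = ((i + 1) * centralBinom (i + 1)) ^ 2 * (2 * i + 3) by ring, hrec]
          ring
      _ ≤ 4 * (2 * i + 2) ^ 2 * 16 ^ i := by gcongr; nlinarith
      _ = (i + 1) ^ 2 * 16 ^ (i + 1) := by ring

theorem sum_range_ite_mul_choose (j l : ℕ) :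
    ∑ k ∈ Finset.range (l + 1), (if k = 0 then 2 else 1) * (k + 1 + 2 * j).choose j
      = (l + 2 * (j + 1)).choose (j + 1) := by
  induction l with
  | zero =>
    have hsymm : (2 * j + 1).choose (j + 1) = (2 * j + 1).choose j := by
      rw [choose_symm_of_eq_add]; ring
    rw [Finset.sum_range_one, if_pos rfl, show 0 + 2 * (j + 1) = 2 * j + 1 + 1 by ring,
      choose_succ_succ', hsymm, show 0 + 1 + 2 * j = 2 * j + 1 by ring]
    ring
  | succ l ih =>
    rw [Finset.sum_range_succ, ih, if_neg (by omega),
      show l + 1 + 2 * (j + 1) = l + 2 * (j + 1) + 1 by ring, choose_succ_succ',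
      show l + 1 + 1 + 2 * j = l + 2 * (j + 1) by ring, one_mul, add_comm]

end Nat

theorem tendsto_centralBinom_div_four_pow :
    Tendsto (fun j => (Nat.centralBinom j : ℝ≥0∞) / 4 ^ j) atTop (𝓝 0) := by
  have hbound : ∀ j : ℕ, (Nat.centralBinom j : ℝ) / 4 ^ j ≤ Real.sqrt (2 * j + 1)⁻¹ := by
    intro j
    refine Real.le_sqrt_of_sq_le ?_
    rw [div_pow, ← pow_mul, mul_comm, pow_mul, div_le_iff₀ (by positivity), ← div_eq_inv_mul,
      le_div_iff₀ (by positivity)]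
    exact_mod_cast Nat.centralBinom_sq_mul_le j
  have hlin : Tendsto (fun j : ℕ => 2 * (j : ℝ) + 1) atTop atTop :=
    tendsto_atTop_add_const_right _ _ (tendsto_natCast_atTop_atTop.const_mul_atTop two_pos)
  have hreal := squeeze_zero (fun j => by positivity) hbound
    (by simpa using (tendsto_inv_atTop_zero.comp hlin).sqrt)
  simpa [ENNReal.ofReal_div_of_pos] using ENNReal.tendsto_ofReal hreal

noncomputable def iterDensity (j k : ℕ) : ℝ≥0∞ := ((k + 2 * j).choose j : ℝ≥0∞) / 4 ^ j

@[simp]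
theorem iterDensity_zero_left (k : ℕ) : iterDensity 0 k = 1 := by
  simp [iterDensity]

theorem iterDensity_succ_left (j l : ℕ) :
    iterDensity (j + 1) l
      = ∑ k ∈ Finset.range (l + 1), (if k = 0 then 2 else 1) * (iterDensity j (k + 1) / 4) := by
  simp only [iterDensity, div_eq_mul_inv, pow_succ, ← Nat.sum_range_ite_mul_choose]
  push_cast
  rw [ENNReal.mul_inv (by simp) (by simp), Finset.sum_mul]
  refine Finset.sum_congr rfl fun k _ => ?_
  ring

theorem inv_two_mul_inv_succ_le_iterDensity (j k : ℕ) :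
    2⁻¹ * ((j + 1 : ℕ) : ℝ≥0∞)⁻¹ ≤ iterDensity j k := by
  rw [← ENNReal.mul_inv (by simp) (by simp), iterDensity,
    ENNReal.le_div_iff_mul_le (by simp) (by simp),
    ENNReal.inv_mul_le_iff (by simp) (ENNReal.mul_ne_top (by simp) (by simp))]
  have := (Nat.four_pow_le_two_mul_succ_mul_centralBinom j).trans
    (Nat.mul_le_mul_left _ (Nat.choose_le_choose j (show 2 * j ≤ k + 2 * j by omega)))
  exact_mod_cast this

theorem iterDensity_le (j k : ℕ) :
    iterDensity j k ≤ 2 ^ k * ((Nat.centralBinom j : ℝ≥0∞) / 4 ^ j) := by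
  rw [iterDensity, ← mul_div_assoc]
  gcongr
  exact_mod_cast Nat.choose_add_le_two_pow_mul_centralBinom k j

theorem tendsto_iterDensity_atTop (k : ℕ) :
    Tendsto (fun j => iterDensity j k) atTop (𝓝 0) := by
  have := ENNReal.Tendsto.const_mul tendsto_centralBinom_div_four_pow
    (Or.inr (ENNReal.pow_ne_top ENNReal.ofNat_ne_top) : (0 : ℝ≥0∞) ≠ 0 ∨ (2 : ℝ≥0∞) ^ k ≠ ∞)
  rw [mul_zero] at this
  exact tendsto_of_tendsto_of_tendsto_of_le_of_le tendsto_const_nhds this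
    (fun _ => zero_le) (iterDensity_le · k)

noncomputable def branchIndex (lam x : ℝ) : ℕ := sInf {n : ℕ | lam ^ n < x}

section Dynamics

variable {lam x : ℝ} {k : ℕ}

theorem measurableSet_wint {n : ℕ} : MeasurableSet (Wint lam n) := measurableSet_Ioc

theorem wint_succ_subset_Ioc (hlam0 : 0 ≤ lam) (hlam1 : lam ≤ 1) (k : ℕ) :
    Wint lam (k + 1) ⊆ Ioc 0 1 :=
  Ioc_subset_Ioc (pow_nonneg hlam0 _) (pow_le_one₀ hlam0 hlam1)

theorem mem_wint_of_branchIndex_eq_succ (hx : branchIndex lam x = k + 1) :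
    x ∈ Wint lam (k + 1) := by
  have hne : {n : ℕ | lam ^ n < x}.Nonempty := Nat.nonempty_of_sInf_eq_succ hx
  refine ⟨hx ▸ Nat.sInf_mem hne, not_lt.1 fun h => ?_⟩
  have := Nat.sInf_le (show k ∈ {n : ℕ | lam ^ n < x} from h)
  rw [branchIndex] at hx
  omega

theorem branchIndex_ne_zero (hlam1 : lam < 1) (hx : x ∈ Ioc 0 1) : branchIndex lam x ≠ 0 := by
  intro h
  rcases Nat.sInf_eq_zero.1 h with h0 | hempty
  · exact (pow_zero lam ▸ h0 : (1 : ℝ) < x).not_ge hx.2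
  · obtain ⟨n, hn⟩ := exists_pow_lt_of_lt_one hx.1 hlam1
    exact hempty.subset hn

theorem branchIndex_eq_of_mem_wint (hlam0 : 0 ≤ lam) (hlam1 : lam ≤ 1)
    (hx : x ∈ Wint lam (k + 1)) : branchIndex lam x = k + 1 := by
  refine le_antisymm (Nat.sInf_le hx.1) (Nat.succ_le_of_lt (Nat.lt_of_not_le fun hle => ?_))
  have hmem : lam ^ branchIndex lam x < x := Nat.sInf_mem (s := {n : ℕ | lam ^ n < x}) ⟨k + 1, hx.1⟩
  exact hmem.not_ge (hx.2.trans (pow_le_pow_of_le_one hlam0 hlam1 hle))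

theorem exists_branchIndex_eq_succ (hlam1 : lam < 1) (hx : x ∈ Ioc 0 1) :
    ∃ k, branchIndex lam x = k + 1 :=
  Nat.exists_eq_succ_of_ne_zero (branchIndex_ne_zero hlam1 hx)

theorem iUnion_wint_succ (hlam0 : 0 ≤ lam) (hlam1 : lam < 1) :
    ⋃ k, Wint lam (k + 1) = Ioc 0 1 := by
  refine (iUnion_subset (wint_succ_subset_Ioc hlam0 hlam1.le)).antisymm fun x hx => ?_
  obtain ⟨k, hk⟩ := exists_branchIndex_eq_succ hlam1 hx
  exact mem_iUnion.2 ⟨k, mem_wint_of_branchIndex_eq_succ hk⟩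

theorem pairwise_disjoint_wint_succ (hlam0 : 0 ≤ lam) (hlam1 : lam ≤ 1) :
    Pairwise (Function.onFun Disjoint fun k => Wint lam (k + 1)) := fun _ _ hij =>
  disjoint_left.2 fun _ hi hj => hij <| Nat.succ_injective <|
    (branchIndex_eq_of_mem_wint hlam0 hlam1 hi).symm.trans
      (branchIndex_eq_of_mem_wint hlam0 hlam1 hj)

theorem measurable_branchIndex (hlam0 : 0 ≤ lam) (hlam1 : lam ≤ 1) :
    Measurable (branchIndex lam) := by
  have hsucc : ∀ k, branchIndex lam ⁻¹' {k + 1} = Wint lam (k + 1) := fun k =>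
    Set.ext fun x => ⟨mem_wint_of_branchIndex_eq_succ, branchIndex_eq_of_mem_wint hlam0 hlam1⟩
  refine measurable_to_countable' fun n => ?_
  cases n with
  | succ k => exact hsucc k ▸ measurableSet_Ioc
  | zero =>
    have : branchIndex lam ⁻¹' {0} = (⋃ k, branchIndex lam ⁻¹' {k + 1})ᶜ := by
      ext x
      simp only [mem_preimage, mem_singleton_iff, mem_compl_iff, mem_iUnion, not_exists]
      exact ⟨fun h k => by omega, fun h => by_contra fun _ => h (branchIndex lam x - 1) (by omega)⟩
    rw [this]
    exact (MeasurableSet.iUnion fun k => hsucc k ▸ measurableSet_Ioc).compl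

theorem flam_of_mem_wint_one (hlam0 : 0 ≤ lam) (hlam1 : lam ≤ 1) (hx : x ∈ Wint lam 1) :
    Flam lam x = (x - lam) / (1 - lam) := by
  have hx' : x ∈ Wint lam (0 + 1) := hx
  rw [Flam, if_pos (show 0 < x ∧ x ≤ 1 from wint_succ_subset_Ioc hlam0 hlam1 0 hx'),
    if_pos (show sInf {n : ℕ | lam ^ n < x} = 1 from branchIndex_eq_of_mem_wint hlam0 hlam1 hx')]

theorem flam_of_mem_wint_add_two (hlam0 : 0 ≤ lam) (hlam1 : lam ≤ 1)
    (hx : x ∈ Wint lam (k + 2)) : Flam lam x = (x - lam ^ (k + 2)) / (lam * (1 - lam)) := by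
  have hidx : sInf {n : ℕ | lam ^ n < x} = k + 2 := branchIndex_eq_of_mem_wint hlam0 hlam1 hx
  rw [Flam, if_pos (show 0 < x ∧ x ≤ 1 from wint_succ_subset_Ioc hlam0 hlam1 _ hx), hidx,
    if_neg (by omega)]

/-- For `k = 0` the truncated subtraction gives `lam ^ (k - 1) = 1`. -/
theorem image_flam_wint (hlam0 : 0 < lam) (hlam1 : lam < 1) (k : ℕ) :
    Flam lam '' Wint lam (k + 1) = Ioc 0 (lam ^ (k - 1)) := by
  cases k with
  | zero =>
    have heq : EqOn (Flam lam) (fun x => (x - lam) / (1 - lam)) (Wint lam 1) :=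
      fun _ hx => flam_of_mem_wint_one hlam0.le hlam1.le hx
    rw [heq.image_eq, Wint, Real.image_sub_div_Ioc (by linarith)]
    simp [sub_ne_zero.2 hlam1.ne']
  | succ k =>
    have heq : EqOn (Flam lam) (fun x => (x - lam ^ (k + 2)) / (lam * (1 - lam)))
        (Wint lam (k + 2)) := fun _ hx => flam_of_mem_wint_add_two hlam0.le hlam1.le hx
    rw [heq.image_eq, Wint, Real.image_sub_div_Ioc (by nlinarith)]
    congr 1
    · simp
    · rw [show k + 2 - 1 = k + 1 from rfl, Nat.add_sub_cancel]
      field_simp [sub_ne_zero.2 hlam1.ne']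
      ring

theorem flam_of_notMem (hx : x ∉ Ioc 0 1) : Flam lam x = x := by
  rw [Flam, if_neg (show ¬(0 < x ∧ x ≤ 1) from hx)]

theorem mem_Ioc_of_flam_mem_Ioc (hx : Flam lam x ∈ Ioc 0 1) : x ∈ Ioc 0 1 := by
  by_contra h
  exact h (flam_of_notMem h ▸ hx)

theorem measurable_flam (hlam0 : 0 ≤ lam) (hlam1 : lam ≤ 1) : Measurable (Flam lam) := by
  have hidx := measurable_branchIndex hlam0 hlam1
  refine Measurable.ite measurableSet_Ioc (Measurable.ite (hidx (measurableSet_singleton 1))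
    (by fun_prop) ?_) measurable_id
  exact (measurable_id.sub (measurable_from_top.comp hidx)).div_const _

variable {t : ℝ} {m : Measure ℝ}

theorem conformal_factor_eq (hlam0 : 0 < lam) (hlam1 : lam < 1) (hl : lam ^ t = 1 / 2) (k : ℕ) :
    ENNReal.ofReal (Real.exp (Real.log ((1 - lam) ^ t / (1 - lam ^ t))) * slopeW lam (k + 1) ^ t)
      = if k = 0 then 2 else 4 := by
  have hpos : 0 < (1 - lam) ^ t := Real.rpow_pos_of_pos (by linarith) t
  have hψ : (1 - lam) ^ t / (1 - lam ^ t) = 2 * (1 - lam) ^ t := by rw [hl]; ring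
  rw [hψ, Real.exp_log (by positivity), slopeW]
  cases k with
  | zero =>
    rw [if_pos rfl, if_pos rfl, one_div, Real.inv_rpow (by linarith), mul_assoc,
      mul_inv_cancel₀ hpos.ne', mul_one, ENNReal.ofReal_ofNat]
  | succ k =>
    rw [if_neg (by omega), if_neg (by omega), one_div, Real.inv_rpow (by nlinarith),
      Real.mul_rpow hlam0.le (by linarith), hl]
    field_simp
    norm_num

theorem four_mul_measure_wint_inter_preimage (hlam0 : 0 < lam) (hlam1 : lam < 1)
    (hl : lam ^ t = 1 / 2) (hconf : IsConformal lam t (Real.log ((1 - lam) ^ t / (1 - lam ^ t))) m)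
    {B : Set ℝ} (hB : MeasurableSet B) (k : ℕ) :
    4 * m (Wint lam (k + 1) ∩ Flam lam ⁻¹' B)
      = (if k = 0 then 2 else 1) * m (B ∩ Ioc 0 (lam ^ (k - 1))) := by
  have h := hconf (k + 1) (by omega) (Wint lam (k + 1) ∩ Flam lam ⁻¹' B)
    (measurableSet_wint.inter (measurable_flam hlam0.le hlam1.le hB)) inter_subset_left
  rw [image_inter_preimage, image_flam_wint hlam0 hlam1, conformal_factor_eq hlam0 hlam1 hl] at h
  rw [inter_comm B, h]
  cases k with
  | zero => rw [if_pos rfl, if_pos rfl, ← mul_assoc]; norm_num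
  | succ k => rw [if_neg (by omega), if_neg (by omega), one_mul]

theorem setLIntegral_comp_branchIndex_of_subset_wint (hlam0 : 0 ≤ lam) (hlam1 : lam ≤ 1)
    (g : ℕ → ℝ≥0∞) {C : Set ℝ} (hC : MeasurableSet C) (hCW : C ⊆ Wint lam (k + 1)) :
    ∫⁻ x in C, g (branchIndex lam x) ∂m = g (k + 1) * m C := by
  rw [setLIntegral_congr_fun hC fun x hx => by rw [branchIndex_eq_of_mem_wint hlam0 hlam1 (hCW hx)],
    setLIntegral_const]

theorem setLIntegral_comp_branchIndex_eq_tsum (hlam0 : 0 ≤ lam) (hlam1 : lam < 1)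
    (g : ℕ → ℝ≥0∞) {C : Set ℝ} (hC : MeasurableSet C) (hC1 : C ⊆ Ioc 0 1) :
    ∫⁻ x in C, g (branchIndex lam x) ∂m = ∑' k, g (k + 1) * m (C ∩ Wint lam (k + 1)) := by
  conv_lhs => rw [← inter_eq_left.2 hC1, ← iUnion_wint_succ hlam0 hlam1, inter_iUnion]
  rw [lintegral_iUnion (fun k => hC.inter measurableSet_wint)
    ((pairwise_disjoint_wint_succ hlam0 hlam1.le).mono fun _ _ h =>
      h.mono inter_subset_right inter_subset_right)]
  exact tsum_congr fun k => setLIntegral_comp_branchIndex_of_subset_wint hlam0 hlam1.le g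
    (hC.inter measurableSet_wint) inter_subset_right

theorem tsum_indicator_Ioc_pow_pred (hlam0 : 0 ≤ lam) (hlam1 : lam < 1) (g : ℕ → ℝ≥0∞)
    (hx : x ∈ Ioc 0 1) :
    ∑' k, (Ioc 0 (lam ^ (k - 1))).indicator (fun _ => g k) x
      = ∑ k ∈ Finset.range (branchIndex lam x + 1), g k := by
  obtain ⟨l, hl⟩ := exists_branchIndex_eq_succ hlam1 hx
  have hW := mem_wint_of_branchIndex_eq_succ hl
  have hmem : ∀ k, x ∈ Ioc 0 (lam ^ (k - 1)) ↔ k ∈ Finset.range (branchIndex lam x + 1) := by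
    intro k
    rw [hl, Finset.mem_range, mem_Ioc, and_iff_right hx.1]
    constructor
    · intro hxk
      by_contra hk
      exact (hW.1.trans_le hxk).not_ge (pow_le_pow_of_le_one hlam0 hlam1.le (by omega))
    · exact fun hk => hW.2.trans (pow_le_pow_of_le_one hlam0 hlam1.le (by omega))
  have hind : ∀ k, (Ioc 0 (lam ^ (k - 1))).indicator (fun _ => g k) x
      = (Finset.range (branchIndex lam x + 1) : Set ℕ).indicator g k := by
    intro k
    simp only [indicator_apply, hmem, Finset.mem_coe]
  rw [tsum_congr hind, sum_eq_tsum_indicator]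

theorem measure_preimage_iterate_flam (hlam0 : 0 < lam) (hlam1 : lam < 1) (hl : lam ^ t = 1 / 2)
    (hconf : IsConformal lam t (Real.log ((1 - lam) ^ t / (1 - lam ^ t))) m) (j : ℕ)
    {B : Set ℝ} (hB : MeasurableSet B) (hB1 : B ⊆ Ioc 0 1) :
    m ((Flam lam)^[j] ⁻¹' B) = ∫⁻ x in B, iterDensity j (branchIndex lam x) ∂m := by
  induction j generalizing B with
  | zero => simp
  | succ j ih =>
    set w : ℕ → ℝ≥0∞ := fun k => (if k = 0 then 2 else 1) * (iterDensity j (k + 1) / 4)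
    have hFB : MeasurableSet (Flam lam ⁻¹' B) := measurable_flam hlam0.le hlam1.le hB
    have hstep : ∀ k, iterDensity j (k + 1) * m (Flam lam ⁻¹' B ∩ Wint lam (k + 1))
        = w k * m (B ∩ Ioc 0 (lam ^ (k - 1))) := fun k => by
      rw [← ENNReal.div_mul_cancel (a := 4) (b := iterDensity j (k + 1)) four_ne_zero
          ENNReal.ofNat_ne_top,
        mul_assoc, inter_comm, four_mul_measure_wint_inter_preimage hlam0 hlam1 hl hconf hB]
      ring
    calc m ((Flam lam)^[j + 1] ⁻¹' B) = m ((Flam lam)^[j] ⁻¹' (Flam lam ⁻¹' B)) := by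
          rw [Function.iterate_succ', preimage_comp]
      _ = ∑' k, w k * m (B ∩ Ioc 0 (lam ^ (k - 1))) := by
          rw [ih hFB fun x hx => mem_Ioc_of_flam_mem_Ioc (hB1 hx),
            setLIntegral_comp_branchIndex_eq_tsum hlam0.le hlam1 _ hFB
              fun x hx => mem_Ioc_of_flam_mem_Ioc (hB1 hx)]
          exact tsum_congr hstep
      _ = ∑' k, ∫⁻ x in B, (Ioc 0 (lam ^ (k - 1))).indicator (fun _ => w k) x ∂m := by
          refine tsum_congr fun k => ?_
          rw [lintegral_indicator_const measurableSet_Ioc, Measure.restrict_apply measurableSet_Ioc,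
            inter_comm]
      _ = ∫⁻ x in B, ∑' k, (Ioc 0 (lam ^ (k - 1))).indicator (fun _ => w k) x ∂m :=
          (lintegral_tsum fun k =>
            (measurable_const.indicator measurableSet_Ioc).aemeasurable).symm
      _ = ∫⁻ x in B, iterDensity (j + 1) (branchIndex lam x) ∂m :=
          setLIntegral_congr_fun hB fun x hx => by
            rw [tsum_indicator_Ioc_pow_pred hlam0.le hlam1 w (hB1 hx), iterDensity_succ_left]

theorem measure_preimage_iterate_flam_of_subset_wint (hlam0 : 0 < lam) (hlam1 : lam < 1)
    (hl : lam ^ t = 1 / 2) (hconf : IsConformal lam t (Real.log ((1 - lam) ^ t / (1 - lam ^ t))) m)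
    (j : ℕ) {C : Set ℝ} (hC : MeasurableSet C) (hCW : C ⊆ Wint lam (k + 1)) :
    m ((Flam lam)^[j] ⁻¹' C) = iterDensity j (k + 1) * m C :=
  (measure_preimage_iterate_flam hlam0 hlam1 hl hconf j hC
    (hCW.trans (wint_succ_subset_Ioc hlam0.le hlam1.le k))).trans
    (setLIntegral_comp_branchIndex_of_subset_wint hlam0.le hlam1.le _ hC hCW)

theorem measure_eq_zero_of_isWanderingSet [IsFiniteMeasure m] (hlam0 : 0 < lam) (hlam1 : lam < 1)
    (hl : lam ^ t = 1 / 2) (hconf : IsConformal lam t (Real.log ((1 - lam) ^ t / (1 - lam ^ t))) m)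
    {A : Set ℝ} (hA : MeasurableSet A) (hA1 : A ⊆ Ioc 0 1) (hw : IsWanderingSet lam A) :
    m A = 0 := by
  by_contra hA0
  obtain ⟨k, hk⟩ : ∃ k, m (A ∩ Wint lam (k + 1)) ≠ 0 := by
    by_contra! h
    refine hA0 (measure_mono_null (fun x hx => ?_) (measure_iUnion_null h))
    rw [← iUnion_wint_succ hlam0.le hlam1] at hA1
    exact (inter_iUnion _ _).subset ⟨hx, hA1 hx⟩
  have hlow : ∀ j, 2⁻¹ * ((j + 1 : ℕ) : ℝ≥0∞)⁻¹ * m (A ∩ Wint lam (k + 1))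
      ≤ m ((Flam lam)^[j] ⁻¹' A) := fun j =>
    calc _ ≤ iterDensity j (k + 1) * m (A ∩ Wint lam (k + 1)) := by
          gcongr; exact inv_two_mul_inv_succ_le_iterDensity j (k + 1)
      _ = m ((Flam lam)^[j] ⁻¹' (A ∩ Wint lam (k + 1))) :=
          (measure_preimage_iterate_flam_of_subset_wint hlam0 hlam1 hl hconf j
            (hA.inter measurableSet_wint) inter_subset_right).symm
      _ ≤ m ((Flam lam)^[j] ⁻¹' A) := measure_mono (preimage_mono inter_subset_left)
  refine tsum_measure_preimage_iterate_ne_top (measurable_flam hlam0.le hlam1.le) hA hw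
    (top_unique ((ENNReal.tsum_le_tsum hlow).trans' ?_))
  rw [ENNReal.tsum_mul_right, ENNReal.tsum_mul_left, ENNReal.tsum_inv_natCast_succ_eq_top,
    ENNReal.mul_top (by norm_num), ENNReal.top_mul hk]

theorem not_exists_invariant_probability_absolutelyContinuous [IsFiniteMeasure m]
    (hlam0 : 0 < lam) (hlam1 : lam < 1) (hl : lam ^ t = 1 / 2)
    (hconf : IsConformal lam t (Real.log ((1 - lam) ^ t / (1 - lam ^ t))) m) :
    ¬ ∃ μ : Measure ℝ, IsProbabilityMeasure μ ∧ μ (Ioc 0 1) = 1 ∧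
      (∀ A : Set ℝ, MeasurableSet A → μ (Flam lam ⁻¹' A) = μ A) ∧ μ ≪ m := by
  rintro ⟨μ, hμ, hμ1, hinv, hμm⟩
  have hF := measurable_flam hlam0.le hlam1.le
  have hpres : MeasurePreserving (Flam lam) μ μ :=
    ⟨hF, Measure.ext fun A hA => by rw [Measure.map_apply hF hA, hinv A hA]⟩
  have hW : ∀ k, μ (Wint lam (k + 1)) = 0 := fun k =>
    hpres.measure_eq_zero_of_tendsto_measure_preimage_iterate hμm measurableSet_wint <| by
      simp_rw [measure_preimage_iterate_flam_of_subset_wint hlam0 hlam1 hl hconf _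
        measurableSet_wint subset_rfl]
      simpa using ENNReal.Tendsto.mul_const (tendsto_iterDensity_atTop (k + 1))
        (Or.inr (measure_ne_top m _))
  rw [← iUnion_wint_succ hlam0.le hlam1, measure_iUnion_null hW] at hμ1
  exact zero_ne_one hμ1

end Dynamics

theorem stmt10_general (lam t : ℝ) (h1 : 0 < lam) (h2 : lam < 1)
    (hl : lam ^ t = 1/2)
    (m : Measure ℝ) (hm : IsProbabilityMeasure m)
    (hconf : IsConformal lam t (Real.log ((1-lam)^t / (1 - lam^t))) m) :
    (∀ A : Set ℝ, MeasurableSet A → A ⊆ Set.Ioc 0 1 → IsWanderingSet lam A →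
      m A = 0) ∧
    ¬ ∃ μ : Measure ℝ, IsProbabilityMeasure μ ∧ μ (Set.Ioc 0 1) = 1 ∧
      (∀ A : Set ℝ, MeasurableSet A → μ (Flam lam ⁻¹' A) = μ A) ∧ μ ≪ m :=
  ⟨fun _ hA hA1 hw => measure_eq_zero_of_isWanderingSet h1 h2 hl hconf hA hA1 hw,
    not_exists_invariant_probability_absolutelyContinuous h1 h2 hl hconf⟩

/-- For `lam^t = 1/2`, the `(t, log ψ(t))`-conformal probability measure
`m` with `m(W k) = (1/2)^k` is conservative, but admits no absolutely continuous
`F_lam`-invariant probability measure: the system is null recurrent. -/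
theorem stmt10 (lam t : ℝ) (h1 : 0 < lam) (h2 : lam < 1) (ht : 0 < t)
    (hl : lam ^ t = 1/2)
    (m : Measure ℝ) (hm : IsProbabilityMeasure m) (hm1 : m (Set.Ioc 0 1) = 1)
    (hconf : IsConformal lam t (Real.log ((1-lam)^t / (1 - lam^t))) m)
    (hmass : ∀ k : ℕ, 1 ≤ k → m (Wint lam k) = ENNReal.ofReal ((1/2)^k)) :
    (∀ A : Set ℝ, MeasurableSet A → A ⊆ Set.Ioc 0 1 → IsWanderingSet lam A →
      m A = 0) ∧
    ¬ ∃ μ : Measure ℝ, IsProbabilityMeasure μ ∧ μ (Set.Ioc 0 1) = 1 ∧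
      (∀ A : Set ℝ, MeasurableSet A → μ (Flam lam ⁻¹' A) = μ A) ∧ μ ≪ m :=
  stmt10_general lam t h1 h2 hl m hm hconf
end

section
/- For every λ ∈ (0,1), every t ∈ ℝ and every K ≥ 1, the characteristic polynomials of the K×K real matrices A^t_K and B^t_K coincide, where (A^t_K)_{1,j} = (1−λ)^t·λ^{t(j−1)} for all j, (A^t_K)_{i,j} = (1−λ)^t·λ^{t(j−i+1)} for i ≥ 2 and j ≥ i−1, and (A^t_K)_{i,j} = 0 otherwise; and (B^t_K)_{1,j} = (1−λ)^t for all j, (B^t_K)_{i,j} = (λ(1−λ))^t for i ≥ 2 and j ≥ i−1, and (B^t_K)_{i,j} = 0 otherwise. -/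
open MeasureTheory Set Filter Topology

/-- The matrix `A^t_K` (1-based indexing in the paper; here `i : Fin K` corresponds
to row `i+1`): first row `(1-lam)^t * lam^(t(j-1))`, rows `i ≥ 2` have
`(1-lam)^t * lam^(t(j-i+1))` in columns `j ≥ i-1`, zeros elsewhere. -/
noncomputable def AtK (lam t : ℝ) (K : ℕ) : Matrix (Fin K) (Fin K) ℝ :=
  fun i j =>
    if i.val = 0 then (1-lam)^t * lam ^ (t * (j.val : ℝ))
    else if i.val ≤ j.val + 1 then
      (1-lam)^t * lam ^ (t * ((j.val : ℝ) - (i.val : ℝ) + 1))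
    else 0

/-- The matrix `B^t_K`: first row `(1-lam)^t`, rows `i ≥ 2` have `(lam(1-lam))^t`
in columns `j ≥ i-1`, zeros elsewhere. -/
noncomputable def BtK (lam t : ℝ) (K : ℕ) : Matrix (Fin K) (Fin K) ℝ :=
  fun i j =>
    if i.val = 0 then (1-lam)^t
    else if i.val ≤ j.val + 1 then (lam*(1-lam))^t
    else 0

open Polynomial Matrix in
/-- Characteristic polynomials are invariant under conjugation. -/
lemma charpoly_conj_aux {n R : Type*} [DecidableEq n] [Fintype n] [CommRing R]
    (P M : Matrix n n R) [Invertible P] :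
    (P * M * ⅟P).charpoly = M.charpoly := by
  letI : Invertible ((C : R →+* R[X]).mapMatrix P) :=
    Invertible.map ((C : R →+* R[X]).mapMatrix : Matrix n n R →+* Matrix n n R[X]) P
  have hmap : (C : R →+* R[X]).mapMatrix (⅟P)
      = ⅟((C : R →+* R[X]).mapMatrix P) :=
    map_invOf ((C : R →+* R[X]).mapMatrix : Matrix n n R →+* Matrix n n R[X]) P
  have hmul : ∀ (A B : Matrix n n R), (C : R →+* R[X]).mapMatrix (A * B)
      = (C : R →+* R[X]).mapMatrix A * (C : R →+* R[X]).mapMatrix B := fun A B =>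
    RingHom.map_mul _ A B
  have h : charmatrix (P * M * ⅟P)
      = ((C : R →+* R[X]).mapMatrix P) * charmatrix M * ⅟((C : R →+* R[X]).mapMatrix P) := by
    rw [charmatrix, charmatrix, hmul, hmul, hmap, mul_sub, sub_mul]
    congr 1
    rw [mul_assoc]
    have hc : Commute (Matrix.scalar n (X : R[X])) (⅟((C : R →+* R[X]).mapMatrix P)) :=
      Matrix.scalar_commute _ (fun r => Commute.all _ _) _
    rw [hc.eq, ← mul_assoc, mul_invOf_self, one_mul]
  unfold Matrix.charpoly
  rw [h, det_mul, det_mul, mul_comm, ← mul_assoc, ← det_mul, invOf_mul_self, det_one, one_mul]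

/-- the characteristic polynomials of `A^t_K` and `B^t_K` coincide. -/
theorem stmt11 (lam t : ℝ) (h1 : 0 < lam) (h2 : lam < 1) (K : ℕ) (hK : 1 ≤ K) :
    (AtK lam t K).charpoly = (BtK lam t K).charpoly := by
  have hlne : ∀ x : ℝ, lam ^ x ≠ 0 := fun x => (Real.rpow_pos_of_pos h1 x).ne'
  set d : Fin K → ℝ := fun i => lam ^ (t * (i.val : ℝ)) with hd
  set D : Matrix (Fin K) (Fin K) ℝ := Matrix.diagonal d with hD
  set E : Matrix (Fin K) (Fin K) ℝ := Matrix.diagonal (fun i => (d i)⁻¹) with hE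
  have hDE : D * E = 1 := by
    rw [hD, hE, Matrix.diagonal_mul_diagonal]
    have h' : (fun i => d i * (d i)⁻¹) = fun _ : Fin K => (1:ℝ) :=
      funext fun i => mul_inv_cancel₀ (hlne _)
    rw [h', Matrix.diagonal_one]
  have hED : E * D = 1 := by
    rw [hE, hD, Matrix.diagonal_mul_diagonal]
    have h' : (fun i => (d i)⁻¹ * d i) = fun _ : Fin K => (1:ℝ) :=
      funext fun i => inv_mul_cancel₀ (hlne _)
    rw [h', Matrix.diagonal_one]
  letI : Invertible D := ⟨E, hED, hDE⟩
  have hinvD : ⅟D = E := invOf_eq_right_inv hDE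
  have key : BtK lam t K = D * AtK lam t K * ⅟D := by
    rw [hinvD]
    have hent : ∀ i j, (D * AtK lam t K * E) i j
        = d i * AtK lam t K i j * (d j)⁻¹ := by
      intro i j
      rw [hD, hE, Matrix.mul_diagonal, Matrix.diagonal_mul]
    ext i j
    rw [hent]
    unfold AtK BtK
    by_cases hi : i.val = 0
    · simp only [hi, if_true, if_false]
      rw [hd]
      dsimp only
      rw [hi]
      push_cast
      rw [mul_zero, Real.rpow_zero, one_mul, mul_assoc, mul_inv_cancel₀ (hlne _), mul_one]
    · simp only [hi, if_false]
      by_cases hij : i.val ≤ j.val + 1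
      · simp only [hij, if_true, if_false]
        rw [hd]
        dsimp only
        rw [Real.mul_rpow h1.le (by linarith), ← Real.rpow_neg h1.le (t * (j.val : ℝ))]
        rw [show lam ^ (t * (i.val:ℝ)) * ((1-lam)^t * lam ^ (t * ((j.val:ℝ) - (i.val:ℝ) + 1)))
              * lam ^ (-(t * (j.val:ℝ)))
            = (1-lam)^t * (lam ^ (t * (i.val:ℝ)) * lam ^ (t * ((j.val:ℝ) - (i.val:ℝ) + 1))
              * lam ^ (-(t * (j.val:ℝ)))) by ring]
        rw [← Real.rpow_add h1, ← Real.rpow_add h1]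
        rw [show t * (i.val:ℝ) + t * ((j.val:ℝ) - (i.val:ℝ) + 1) + -(t * (j.val:ℝ)) = t by ring]
        ring
      · simp only [hij, if_false, mul_zero, zero_mul]
  rw [key]
  exact (charpoly_conj_aux D (AtK lam t K)).symm
end

section
/- Let λ ∈ (0,1) and t ∈ ℝ. For K ≥ 1 let M_K be the K×K real matrix with (M_K)_{1,j} = 1 for all j, (M_K)_{i,j} = λ^t for i ≥ 2 and j ≥ i−1, and (M_K)_{i,j} = 0 otherwise, and set α_K(s) := det(M_K − s·I), with the convention α_0(s) := 1. Then α_1(s) = 1 − s, and for every K ≥ 2 and all s ∈ ℝ the recursion α_K(s) = −s·α_{K−1}(s) − s·λ^t·α_{K−2}(s) holds. -/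
open MeasureTheory Set Filter Topology

/-- The matrix `M_K = (1-lam)^{-t} B^t_K`: first row all `1`, rows `i ≥ 2` have
`lam^t` in columns `j ≥ i-1`, zeros elsewhere (1-based indexing; `i : Fin K`
corresponds to row `i+1`). -/
noncomputable def MK (lam t : ℝ) (K : ℕ) : Matrix (Fin K) (Fin K) ℝ :=
  fun i j => if i.val = 0 then 1 else if i.val ≤ j.val + 1 then lam ^ t else 0

/-- `α_K(s) = det (M_K - s I)`; for `K = 0` this is `1` (determinant of the empty
matrix), matching the convention `α_0 = 1`. -/
noncomputable def alphaK (lam t : ℝ) (K : ℕ) (s : ℝ) : ℝ :=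
  (MK lam t K - s • (1 : Matrix (Fin K) (Fin K) ℝ)).det

/-!
Expand `det (M_K - s I)` along its last row, which is `(0, …, 0, λ^t, λ^t - s)`. Since the
entries of `M_K` do not depend on `K`, the minor at the diagonal corner is `M_{K-1} - s I`, and
the other minor differs from `M_{K-1} - s I` only by `s` in its bottom-right entry, so by
linearity in the last column its determinant is `α_{K-1}(s) + s α_{K-2}(s)`.
-/

namespace Matrix

theorem det_updateCol_single {R : Type*} [CommRing R] {n : ℕ}
    (M : Matrix (Fin (n + 1)) (Fin (n + 1)) R) (i j : Fin (n + 1)) (s : R) :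
    (M.updateCol j (Pi.single i s)).det
      = (-1) ^ (i + j : ℕ) * s * (M.submatrix i.succAbove j.succAbove).det := by
  rw [det_succ_column _ j, Fintype.sum_eq_single i fun k hk => by simp [hk]]
  simp [submatrix_updateCol_succAbove]

end Matrix

open Matrix

theorem alphaK_eq_det_submatrix_castSucc (lam t s : ℝ) (K : ℕ) :
    alphaK lam t K s
      = ((MK lam t (K + 1) - s • 1).submatrix Fin.castSucc Fin.castSucc).det := by
  rw [alphaK]
  congr 1
  ext i j
  simp [MK, one_apply]

theorem submatrix_castSucc_succAbove_castSucc_last (lam t s : ℝ) (K : ℕ) :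
    (MK lam t (K + 2) - s • 1).submatrix Fin.castSucc (Fin.last K).castSucc.succAbove
      = (MK lam t (K + 1) - s • 1).updateCol (Fin.last K)
          ((fun i => (MK lam t (K + 1) - s • 1) i (Fin.last K)) + Pi.single (Fin.last K) s) := by
  ext i j
  refine Fin.lastCases ?_ (fun k => ?_) j
  · simp [MK, Pi.single_apply, one_apply, show (i : ℕ) ≤ K + 1 + 1 by omega]
  · simp [MK, one_apply]

theorem alphaK_add_two (lam t s : ℝ) (K : ℕ) :
    alphaK lam t (K + 2) s = -s * alphaK lam t (K + 1) s - s * lam ^ t * alphaK lam t K s := by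
  have hzero (j : Fin K) : (MK lam t (K + 2) - s • 1) (Fin.last _) j.castSucc.castSucc = 0 := by
    simp [MK, one_apply, Fin.ext_iff, j.isLt, (j.isLt.trans K.lt_succ_self).ne']
  have hsubdiag : (MK lam t (K + 2) - s • 1) (Fin.last _) (Fin.last K).castSucc = lam ^ t := by
    simp [MK, one_apply, (Fin.castSucc_lt_last (Fin.last K)).ne']
  have hdiag : (MK lam t (K + 2) - s • 1) (Fin.last _) (Fin.last _) = lam ^ t - s := by simp [MK]
  have hminor : ((MK lam t (K + 2) - s • 1).submatrix Fin.castSucc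
      (Fin.last K).castSucc.succAbove).det = alphaK lam t (K + 1) s + s * alphaK lam t K s := by
    rw [submatrix_castSucc_succAbove_castSucc_last, det_updateCol_add, updateCol_eq_self,
      det_updateCol_single, Fin.succAbove_last, Even.neg_one_pow ⟨_, rfl⟩, one_mul, ← alphaK,
      ← alphaK_eq_det_submatrix_castSucc]
  rw [alphaK, det_succ_row _ (Fin.last (K + 1)), Fin.sum_univ_castSucc, Fin.sum_univ_castSucc,
    Finset.sum_eq_zero fun j _ => by rw [hzero, mul_zero, zero_mul], Fin.succAbove_last, hminor,
    ← alphaK_eq_det_submatrix_castSucc, hsubdiag, hdiag, Even.neg_one_pow ⟨_, rfl⟩,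
    Odd.neg_one_pow ⟨K, by simp only [Fin.val_last, Fin.val_castSucc]; ring⟩]
  ring

theorem stmt12_general (lam t : ℝ) :
    (∀ s : ℝ, alphaK lam t 0 s = 1) ∧
    (∀ s : ℝ, alphaK lam t 1 s = 1 - s) ∧
    (∀ K : ℕ, 2 ≤ K → ∀ s : ℝ, alphaK lam t K s =
      -s * alphaK lam t (K-1) s - s * lam ^ t * alphaK lam t (K-2) s) := by
  refine ⟨fun s => by simp [alphaK], fun s => by simp [alphaK, MK], fun K hK s => ?_⟩
  obtain ⟨K, rfl⟩ := Nat.exists_eq_add_of_le' hK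
  exact alphaK_add_two lam t s K

/-- `α_0(s) = 1` (convention), `α_1(s) = 1 - s`, and for `K ≥ 2`,
`α_K(s) = -s α_{K-1}(s) - s lam^t α_{K-2}(s)`. -/
theorem stmt12 (lam t : ℝ) (h1 : 0 < lam) (h2 : lam < 1) :
    (∀ s : ℝ, alphaK lam t 0 s = 1) ∧
    (∀ s : ℝ, alphaK lam t 1 s = 1 - s) ∧
    (∀ K : ℕ, 2 ≤ K → ∀ s : ℝ, alphaK lam t K s =
      -s * alphaK lam t (K-1) s - s * lam ^ t * alphaK lam t (K-2) s) :=
  stmt12_general lam t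
end

section
/- Let λ ∈ (0,1) and set t_0 := −log 2 / log λ. Define P : ℝ → ℝ by P(t) = log((1−λ)^t/(1−λ^t)) for t ≥ t_0 and P(t) = log 4 + t·log(λ(1−λ)) for t ≤ t_0. Then P is continuously differentiable on all of ℝ, but P is not twice differentiable at t_0: the second derivative from the left at t_0 equals 0 while the second derivative from the right at t_0 equals 2(log λ)^2 > 0. (Thus the pressure function t ↦ P(−t log|F_λ'|) has a second order phase transition at t_0.) -/
/-!
Write `L = log λ`. On `[t₀, ∞)` the pressure is `t log(1-λ) - log(1-λ^t)`, with derivative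
`log(1-λ) + L λ^t/(1-λ^t)` and second derivative `L² λ^t/(1-λ^t)²`. At `t₀` we have
`λ^{t₀} = 1/2`, so the first derivative equals `log(1-λ) + L = log(λ(1-λ))`, the slope of the
affine branch, while the second derivative equals `2L²`, against `0` for the affine branch.
Since `t₀ > 0`, the first derivative is `log(1-λ) + L λ^s/(1-λ^s)` at `s = max t t₀`, which
stays where `λ^s < 1`; this makes its continuity immediate.
-/

open Real Set

section OneSided

variable {f : ℝ → ℝ} {a f' g' : ℝ}

theorem HasDerivWithinAt.hasDerivAt_of_Iic_Ici (hl : HasDerivWithinAt f f' (Iic a) a)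
    (hr : HasDerivWithinAt f f' (Ici a) a) : HasDerivAt f f' a := by
  have := hl.union hr
  rwa [Iic_union_Ici, hasDerivWithinAt_univ] at this

theorem not_differentiableAt_of_hasDerivWithinAt_Iic_Ici (hne : f' ≠ g')
    (hl : HasDerivWithinAt f f' (Iic a) a) (hr : HasDerivWithinAt f g' (Ici a) a) :
    ¬ DifferentiableAt ℝ f a := fun hf => by
  have hfl := hf.hasDerivAt.hasDerivWithinAt (s := Iic a)
  have hfr := hf.hasDerivAt.hasDerivWithinAt (s := Ici a)
  refine hne ?_
  rw [(uniqueDiffOn_Iic a a self_mem_Iic).eq_deriv _ hl hfl,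
    (uniqueDiffOn_Ici a a self_mem_Ici).eq_deriv _ hr hfr]

end OneSided

theorem rpow_neg_log_two_div_log {lam : ℝ} (h0 : 0 < lam) (h1 : lam ≠ 1) :
    lam ^ (-log 2 / log lam) = 1 / 2 := by
  have hL : log lam ≠ 0 := log_ne_zero_of_pos_of_ne_one h0 h1
  rw [rpow_def_of_pos h0, mul_div_cancel₀ _ hL, exp_neg, exp_log two_pos, one_div]

noncomputable def pressureSlope (lam t : ℝ) : ℝ :=
  log (1 - lam) + lam ^ t * log lam / (1 - lam ^ t)

section Branch

variable {lam t : ℝ}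

theorem hasDerivAt_log_rpow_div (h0 : 0 < lam) (h1 : lam < 1) (ht : 0 < t) :
    HasDerivAt (fun s => log ((1 - lam) ^ s / (1 - lam ^ s))) (pressureSlope lam t) t := by
  have h1l : 0 < 1 - lam := sub_pos.2 h1
  have hden (s : ℝ) (hs : 0 < s) : 0 < 1 - lam ^ s := sub_pos.2 (rpow_lt_one h0.le h1 hs)
  have hQ : HasDerivAt (fun s => s * log (1 - lam) - log (1 - lam ^ s)) (pressureSlope lam t) t :=
    ((hasDerivAt_mul_const _).sub (((hasStrictDerivAt_const_rpow h0 t).hasDerivAt.const_sub 1).log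
      (hden t ht).ne')).congr_deriv (by unfold pressureSlope; ring)
  refine hQ.congr_of_eventuallyEq ?_
  filter_upwards [Ioi_mem_nhds ht] with s hs
  rw [log_div (rpow_pos_of_pos h1l s).ne' (hden s hs).ne', log_rpow h1l]

theorem hasDerivAt_pressureSlope (h0 : 0 < lam) (ht : lam ^ t ≠ 1) :
    HasDerivAt (pressureSlope lam) (log lam ^ 2 * lam ^ t / (1 - lam ^ t) ^ 2) t := by
  have hd := (hasStrictDerivAt_const_rpow h0 t).hasDerivAt
  refine (((hd.mul_const (log lam)).div (hd.const_sub 1) (sub_ne_zero.2 ht.symm)).const_add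
    (log (1 - lam))).congr_deriv ?_
  field_simp
  ring

theorem continuousOn_pressureSlope (h0 : 0 < lam) (h1 : lam < 1) :
    ContinuousOn (pressureSlope lam) (Ioi 0) := fun _ hs =>
  (hasDerivAt_pressureSlope h0 (rpow_lt_one h0.le h1 hs).ne).continuousAt.continuousWithinAt

theorem pressureSlope_of_rpow_eq_half (h0 : 0 < lam) (h1 : lam < 1) (ht : lam ^ t = 1 / 2) :
    pressureSlope lam t = log (lam * (1 - lam)) := by
  rw [pressureSlope, ht, log_mul h0.ne' (sub_pos.2 h1).ne']
  ring

end Branch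

theorem hasDerivAt_of_pressure {lam t0 : ℝ} {P : ℝ → ℝ} (h0 : 0 < lam) (h1 : lam < 1)
    (ht0 : lam ^ t0 = 1 / 2) (ht0pos : 0 < t0)
    (hP1 : ∀ t : ℝ, t0 ≤ t → P t = log ((1 - lam) ^ t / (1 - lam ^ t)))
    (hP2 : ∀ t : ℝ, t ≤ t0 → P t = log 4 + t * log (lam * (1 - lam))) (t : ℝ) :
    HasDerivAt P (pressureSlope lam (max t t0)) t := by
  have hslope := pressureSlope_of_rpow_eq_half h0 h1 ht0
  have haffine (s : ℝ) : HasDerivAt (fun x => log 4 + x * log (lam * (1 - lam)))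
      (log (lam * (1 - lam))) s := (hasDerivAt_mul_const _).const_add _
  rcases lt_trichotomy t t0 with h | rfl | h
  · rw [max_eq_right h.le, hslope]
    refine (haffine t).congr_of_eventuallyEq ?_
    filter_upwards [Iio_mem_nhds h] with s hs using hP2 s hs.le
  · rw [max_self, hslope]
    refine HasDerivWithinAt.hasDerivAt_of_Iic_Ici
      ((haffine t).hasDerivWithinAt.congr (fun s hs => hP2 s hs) (hP2 t le_rfl)) ?_
    rw [← hslope]
    exact (hasDerivAt_log_rpow_div h0 h1 ht0pos).hasDerivWithinAt.congr
      (fun s hs => hP1 s hs) (hP1 t le_rfl)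
  · rw [max_eq_left h.le]
    refine (hasDerivAt_log_rpow_div h0 h1 (ht0pos.trans h)).congr_of_eventuallyEq ?_
    filter_upwards [Ioi_mem_nhds h] with s hs using hP1 s hs.le

/-- For `lam ∈ (0,1)` and `t₀ = -log 2 / log lam`, the pressure
function `P`, equal to `log((1-lam)^t/(1-lam^t))` for `t ≥ t₀` and to
`log 4 + t log(lam(1-lam))` for `t ≤ t₀`, is `C¹` on `ℝ` but not twice
differentiable at `t₀`: the second derivative from the left at `t₀` is `0`
while the second derivative from the right is `2 (log lam)² > 0`. -/
theorem stmt14 (lam : ℝ) (h1 : 0 < lam) (h2 : lam < 1)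
    (t0 : ℝ) (ht0 : t0 = -Real.log 2 / Real.log lam)
    (P : ℝ → ℝ)
    (hP1 : ∀ t : ℝ, t0 ≤ t → P t = Real.log ((1-lam)^t / (1 - lam^t)))
    (hP2 : ∀ t : ℝ, t ≤ t0 → P t = Real.log 4 + t * Real.log (lam*(1-lam))) :
    ContDiff ℝ 1 P ∧
    ¬ DifferentiableAt ℝ (deriv P) t0 ∧
    HasDerivWithinAt (deriv P) 0 (Set.Iic t0) t0 ∧
    HasDerivWithinAt (deriv P) (2 * (Real.log lam)^2) (Set.Ici t0) t0 ∧
    0 < 2 * (Real.log lam)^2 := by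
  have hhalf : lam ^ t0 = 1 / 2 := ht0 ▸ rpow_neg_log_two_div_log h1 h2.ne
  have ht0pos : 0 < t0 := by
    rw [ht0, neg_div, neg_pos]
    exact div_neg_of_pos_of_neg (log_pos one_lt_two) (log_neg h1 h2)
  have hPd := hasDerivAt_of_pressure h1 h2 hhalf ht0pos hP1 hP2
  have hderiv : deriv P = fun t => pressureSlope lam (max t t0) := funext fun t => (hPd t).deriv
  have hleft : HasDerivWithinAt (deriv P) 0 (Iic t0) t0 := by
    rw [hderiv]
    exact (hasDerivWithinAt_const t0 _ (pressureSlope lam t0)).congr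
      (fun s hs => by rw [max_eq_right hs]) (by rw [max_self])
  have hright : HasDerivWithinAt (deriv P) (2 * log lam ^ 2) (Ici t0) t0 := by
    rw [hderiv]
    have h := hasDerivAt_pressureSlope h1 (t := t0) (by rw [hhalf]; norm_num)
    rw [hhalf] at h
    exact (h.hasDerivWithinAt.congr (fun s hs => by rw [max_eq_left hs])
      (by rw [max_self])).congr_deriv (by ring)
  have hpos : 0 < 2 * log lam ^ 2 := by positivity [(log_neg h1 h2).ne]
  refine ⟨contDiff_one_iff_deriv.2 ⟨fun t => (hPd t).differentiableAt, ?_⟩,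
    not_differentiableAt_of_hasDerivWithinAt_Iic_Ici hpos.ne hleft hright, hleft, hright, hpos⟩
  rw [hderiv]
  exact (continuousOn_pressureSlope h1 h2).comp_continuous (continuous_id.max continuous_const)
    fun t => ht0pos.trans_le (le_max_right t t0)
end
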